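/- arXiv:hep-th/0304052 — 7 statements merged into one kernel-verified Lean document; each statement's English description precedes it below -/
import Mathlib

section
/- Let λ_1,...,λ_n be pairwise distinct complex numbers and h a nonzero complex number such that λ_i − λ_j ± h ≠ 0 for all i ≠ j. For k < n/2 and any natural number a with a ≤ 2(n − 2k + 1), the sum over all k-element subsets K of {1,...,n} of ∏_{i∈K, j∉K} 1/(λ_i − λ_j) · ( (Σ_{i∈K} λ_i)^a · ∏_{i∈K, j∉K} 1/(λ_i − λ_j + h) − (Σ_{i∈K} λ_i − k·h)^a · ∏_{i∈K, j∉K} 1/(λ_i − λ_j − h) ) equals 0. -/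
open Finset

open Polynomial in
private theorem toda_lagrange_sum_zero (N : Finset ℂ) (P : Polynomial ℂ)
    (hd : P.natDegree + 2 ≤ N.card) :
    ∑ x ∈ N, P.eval x * ∏ y ∈ N.erase x, (x - y)⁻¹ = 0 := by
  have hinj : Set.InjOn (id : ℂ → ℂ) N := Function.injective_id.injOn
  have hdeg : P.degree < (N.card : WithBot ℕ) := by
    calc P.degree ≤ (P.natDegree : WithBot ℕ) := degree_le_natDegree
    _ < (N.card : WithBot ℕ) := by exact_mod_cast Nat.lt_of_lt_of_le (by omega) le_rfl
  have hI := Lagrange.eq_interpolate (f := P) hinj hdeg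
  -- take coefficient at N.card - 1
  have hcoeff := congrArg (fun Q => Q.coeff (N.card - 1)) hI
  simp only [Lagrange.interpolate_apply, Polynomial.finset_sum_coeff, Polynomial.coeff_C_mul] at hcoeff
  have hPc : P.coeff (N.card - 1) = 0 := by
    apply Polynomial.coeff_eq_zero_of_natDegree_lt; omega
  rw [hPc] at hcoeff
  refine Eq.trans ?_ hcoeff.symm
  apply Finset.sum_congr rfl
  intro x hx
  have hb : (Lagrange.basis N id x).natDegree = N.card - 1 := by
    have hdb := Lagrange.degree_basis hinj hx
    exact natDegree_eq_of_degree_eq_some hdb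
  have hc : (Lagrange.basis N id x).coeff (N.card - 1) = ∏ y ∈ N.erase x, (x - y)⁻¹ := by
    rw [← hb, Polynomial.coeff_natDegree]
    unfold Lagrange.basis
    rw [Polynomial.leadingCoeff_prod]
    apply Finset.prod_congr rfl
    intro y hy
    unfold Lagrange.basisDivisor
    rw [Polynomial.leadingCoeff_mul, Polynomial.leadingCoeff_C, Polynomial.leadingCoeff_X_sub_C]
    simp
  rw [hc]
  simp

private theorem toda_insert_sum {ι : Type*} [DecidableEq ι] (U : Finset ι) (p : ℕ)
    (g : Finset ι → ℂ) :
    ∑ A ∈ powersetCard p U, ∑ i ∈ U \ A, g (insert i A)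
      = (p + 1 : ℂ) * ∑ s ∈ powersetCard (p + 1) U, g s := by
  have hr : ∀ s ∈ powersetCard (p+1) U, (p + 1 : ℂ) * g s = ∑ i ∈ s, g s := by
    intro s hs
    rw [Finset.sum_const, (Finset.mem_powersetCard.mp hs).2]
    simp [mul_comm]
  rw [Finset.mul_sum, Finset.sum_congr rfl hr]
  rw [Finset.sum_sigma', Finset.sum_sigma']
  refine Finset.sum_nbij' (fun x => ⟨insert x.2 x.1, x.2⟩) (fun x => ⟨x.1.erase x.2, x.2⟩)
    ?_ ?_ ?_ ?_ ?_
  · rintro ⟨A, i⟩ hx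
    simp only [Finset.mem_sigma, Finset.mem_powersetCard, Finset.mem_sdiff] at hx ⊢
    obtain ⟨⟨hAU, hAc⟩, hiU, hiA⟩ := hx
    exact ⟨⟨Finset.insert_subset hiU hAU, by rw [Finset.card_insert_of_notMem hiA, hAc]⟩,
      Finset.mem_insert_self _ _⟩
  · rintro ⟨s, i⟩ hx
    simp only [Finset.mem_sigma, Finset.mem_powersetCard, Finset.mem_sdiff] at hx ⊢
    obtain ⟨⟨hsU, hsc⟩, his⟩ := hx
    refine ⟨⟨(Finset.erase_subset _ _).trans hsU, ?_⟩, hsU his, Finset.notMem_erase _ _⟩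
    rw [Finset.card_erase_of_mem his, hsc]; omega
  · rintro ⟨A, i⟩ hx
    simp only [Finset.mem_sigma, Finset.mem_powersetCard, Finset.mem_sdiff] at hx
    have : i ∉ A := hx.2.2
    simp [Finset.erase_insert_of_ne, this, Finset.erase_insert]
  · rintro ⟨s, i⟩ hx
    simp only [Finset.mem_sigma, Finset.mem_powersetCard, Finset.mem_sdiff] at hx
    simp [Finset.insert_erase hx.2]
  · rintro ⟨A, i⟩ _
    rfl


private theorem toda_swap_sum {n : ℕ} (p q : ℕ) (F : Finset (Fin n) → Finset (Fin n) → ℂ) :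
    ∑ A ∈ powersetCard p (univ : Finset (Fin n)), ∑ B ∈ powersetCard q Aᶜ, F A B
      = ∑ B ∈ powersetCard q (univ : Finset (Fin n)), ∑ A ∈ powersetCard p Bᶜ, F A B := by
  rw [Finset.sum_sigma', Finset.sum_sigma']
  refine Finset.sum_nbij' (fun x => ⟨x.2, x.1⟩) (fun x => ⟨x.2, x.1⟩) ?_ ?_ ?_ ?_ ?_
  · rintro ⟨A, B⟩ hx
    simp only [Finset.mem_sigma, Finset.mem_powersetCard] at hx ⊢
    refine ⟨⟨Finset.subset_univ _, hx.2.2⟩, ?_, hx.1.2⟩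
    intro i hi
    simp only [Finset.mem_compl]
    intro hiB
    have := hx.2.1 hiB
    simp [hi] at this
  · rintro ⟨B, A⟩ hx
    simp only [Finset.mem_sigma, Finset.mem_powersetCard] at hx ⊢
    refine ⟨⟨Finset.subset_univ _, hx.2.2⟩, ?_, hx.1.2⟩
    intro i hi
    simp only [Finset.mem_compl]
    intro hiA
    have := hx.2.1 hiA
    simp [hi] at this
  · rintro ⟨A, B⟩ _; rfl
  · rintro ⟨B, A⟩ _; rfl
  · rintro ⟨A, B⟩ _; rfl

section TodaAux
open Polynomial
variable {n : ℕ}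

noncomputable def todaRow0 (lam : Fin n → ℂ) (h : ℂ) (i : Fin n) (E : Finset (Fin n)) : ℂ :=
  ∏ j ∈ E, ((lam i - lam j)⁻¹ * (lam i - lam j + h)⁻¹)

noncomputable def todaRow1 (lam : Fin n → ℂ) (h : ℂ) (i : Fin n) (E : Finset (Fin n)) : ℂ :=
  ∏ j ∈ E, ((lam i - lam j)⁻¹ * (lam i - lam j - h)⁻¹)

noncomputable def todaCross (lam : Fin n → ℂ) (h : ℂ) (i i' : Fin n) : ℂ :=
  (lam i - lam i' + 2*h) * (lam i - lam i')⁻¹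

noncomputable def todaTer (lam : Fin n → ℂ) (h : ℂ) (a : ℕ) (A B : Finset (Fin n)) : ℂ :=
  (-1)^B.card * ((∑ i ∈ A, lam i) + (∑ i ∈ B, lam i) - (B.card : ℂ) * h)^a
    * (∏ i ∈ A, todaRow0 lam h i (A ∪ B)ᶜ) * (∏ i ∈ B, todaRow1 lam h i (A ∪ B)ᶜ)
    * ∏ i ∈ A, ∏ j ∈ B, todaCross lam h i j

noncomputable def todaMsum (lam : Fin n → ℂ) (h : ℂ) (a p q : ℕ) : ℂ :=
  ∑ A ∈ powersetCard p (univ : Finset (Fin n)), ∑ B ∈ powersetCard q Aᶜ, todaTer lam h a A B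

variable (lam : Fin n → ℂ) (h : ℂ)

lemma toda_nodes_disj (hh : h ≠ 0)
    (hp : ∀ i j : Fin n, i ≠ j → lam i - lam j + h ≠ 0) (D : Finset (Fin n)) :
    Disjoint (D.image lam) (D.image (fun j => lam j - h)) := by
  refine Finset.disjoint_left.mpr ?_
  intro x hx hx'
  obtain ⟨j, hj, rfl⟩ := Finset.mem_image.mp hx
  obtain ⟨j', hj', hje⟩ := Finset.mem_image.mp hx'
  rcases eq_or_ne j j' with rfl | hne
  · exact hh (by linear_combination -hje)
  · exact hp j j' hne (by linear_combination -hje)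

lemma toda_node_prod0 (hh : h ≠ 0) (hdist : ∀ i j : Fin n, i ≠ j → lam i ≠ lam j)
    (hp : ∀ i j : Fin n, i ≠ j → lam i - lam j + h ≠ 0)
    (D : Finset (Fin n)) (i : Fin n) (hi : i ∈ D) :
    ∏ y ∈ (D.image lam ∪ D.image (fun j => lam j - h)).erase (lam i), (lam i - y)⁻¹
      = h⁻¹ * todaRow0 lam h i (D.erase i) := by
  have hinj : Function.Injective lam := fun x y hxy => by
    by_contra hne; exact hdist x y hne hxy
  have hnot2 : lam i ∉ D.image (fun j => lam j - h) := by
    intro hmem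
    obtain ⟨j, hj, hje⟩ := Finset.mem_image.mp hmem
    rcases eq_or_ne i j with rfl | hne
    · exact hh (by linear_combination -hje)
    · exact hp i j hne (by linear_combination -hje)
  rw [Finset.erase_union_distrib, Finset.erase_eq_of_notMem hnot2,
    ← Finset.image_erase hinj]
  rw [Finset.prod_union (Finset.disjoint_of_subset_left (Finset.image_subset_image
    (Finset.erase_subset _ _)) (toda_nodes_disj lam h hh hp D))]
  rw [Finset.prod_image (fun x _ y _ hxy => hinj hxy),
    Finset.prod_image (fun x _ y _ hxy => hinj (by linear_combination (norm := ring_nf) hxy))]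
  have h2 : ∏ j ∈ D, (lam i - (lam j - h))⁻¹ = h⁻¹ * ∏ j ∈ D.erase i, (lam i - lam j + h)⁻¹ := by
    rw [← Finset.mul_prod_erase _ _ hi]
    congr 1
    · congr 1; ring
    · exact Finset.prod_congr rfl fun j _ => by congr 1; ring
  rw [h2, todaRow0, Finset.prod_mul_distrib]
  ring

lemma toda_node_prod1 (hh : h ≠ 0) (hdist : ∀ i j : Fin n, i ≠ j → lam i ≠ lam j)
    (hp : ∀ i j : Fin n, i ≠ j → lam i - lam j + h ≠ 0)
    (D : Finset (Fin n)) (i : Fin n) (hi : i ∈ D) :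
    ∏ y ∈ (D.image lam ∪ D.image (fun j => lam j - h)).erase (lam i - h), ((lam i - h) - y)⁻¹
      = -h⁻¹ * todaRow1 lam h i (D.erase i) := by
  have hinj : Function.Injective lam := fun x y hxy => by
    by_contra hne; exact hdist x y hne hxy
  have hinj' : Function.Injective (fun j => lam j - h) := fun x y hxy =>
    hinj (by linear_combination (norm := ring_nf) hxy)
  have hnot1 : lam i - h ∉ D.image lam := by
    intro hmem
    obtain ⟨j, hj, hje⟩ := Finset.mem_image.mp hmem
    rcases eq_or_ne j i with rfl | hne
    · exact hh (by linear_combination hje)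
    · exact hp j i hne (by linear_combination hje)
  rw [Finset.erase_union_distrib, Finset.erase_eq_of_notMem hnot1,
    show (D.image (fun j => lam j - h)).erase (lam i - h)
      = (D.erase i).image (fun j => lam j - h) from (Finset.image_erase hinj' _ _).symm]
  rw [Finset.prod_union (Finset.disjoint_of_subset_right (Finset.image_subset_image
    (Finset.erase_subset _ _)) (toda_nodes_disj lam h hh hp D))]
  rw [Finset.prod_image (fun x _ y _ hxy => hinj hxy),
    Finset.prod_image (fun x _ y _ hxy => hinj (by linear_combination (norm := ring_nf) hxy))]
  have h1 : ∏ j ∈ D, ((lam i - h) - lam j)⁻¹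
      = -h⁻¹ * ∏ j ∈ D.erase i, (lam i - lam j - h)⁻¹ := by
    rw [← Finset.mul_prod_erase _ _ hi]
    congr 1
    · rw [show lam i - h - lam i = -h by ring, inv_neg]
    · exact Finset.prod_congr rfl fun j _ => by congr 1; ring
  have h2 : ∏ j ∈ D.erase i, ((lam i - h) - (lam j - h))⁻¹
      = ∏ j ∈ D.erase i, (lam i - lam j)⁻¹ :=
    Finset.prod_congr rfl fun j _ => by congr 1; ring
  rw [h1, h2, todaRow1, Finset.prod_mul_distrib]
  ring

lemma toda_rowA_cancel0 {i' i : Fin n} (h1 : lam i' - lam i ≠ 0) (h2 : lam i' - lam i + h ≠ 0)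
    {D : Finset (Fin n)} (hi : i ∈ D) :
    ((lam i' - lam i) * (lam i' + h - lam i)) * todaRow0 lam h i' D
      = todaRow0 lam h i' (D.erase i) := by
  rw [todaRow0, todaRow0, ← Finset.mul_prod_erase _ _ hi,
    show lam i' + h - lam i = lam i' - lam i + h by ring, ← mul_assoc]
  rw [show (lam i' - lam i) * (lam i' - lam i + h) * ((lam i' - lam i)⁻¹ * (lam i' - lam i + h)⁻¹)
    = ((lam i' - lam i) * (lam i' - lam i)⁻¹) * ((lam i' - lam i + h) * (lam i' - lam i + h)⁻¹)
    by ring, mul_inv_cancel₀ h1, mul_inv_cancel₀ h2, one_mul, one_mul]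

lemma toda_rowB_cancel0 {i' i : Fin n} (h1 : lam i' - lam i ≠ 0) (h2 : lam i' - lam i - h ≠ 0)
    {D : Finset (Fin n)} (hi : i ∈ D) :
    ((lam i' - h - lam i) * (lam i' - 2*h - lam i)) * todaRow1 lam h i' D
      = todaRow1 lam h i' (D.erase i) * todaCross lam h i i' := by
  rw [todaRow1, todaRow1, ← Finset.mul_prod_erase _ _ hi, todaCross]
  rw [show ((lam i' - h - lam i) * (lam i' - 2*h - lam i)) *
      ((lam i' - lam i)⁻¹ * (lam i' - lam i - h)⁻¹ * ∏ j ∈ D.erase i,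
        ((lam i' - lam j)⁻¹ * (lam i' - lam j - h)⁻¹))
    = ((lam i' - lam i - h) * (lam i' - lam i - h)⁻¹) *
      ((∏ j ∈ D.erase i, ((lam i' - lam j)⁻¹ * (lam i' - lam j - h)⁻¹)) *
        ((lam i - lam i' + 2*h) * (lam i - lam i')⁻¹)) +
      ((lam i' - 2*h - lam i) * (((lam i - lam i') - (lam i - lam i')) * (lam i - lam i')⁻¹) *
        ((lam i' - lam i - h) * (lam i' - lam i - h)⁻¹) *
        ∏ j ∈ D.erase i, ((lam i' - lam j)⁻¹ * (lam i' - lam j - h)⁻¹))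
    from ?_, mul_inv_cancel₀ h2]
  · rw [show lam i - lam i' - (lam i - lam i') = 0 by ring]
    ring
  · have hx : (lam i' - lam i)⁻¹ = -(lam i - lam i')⁻¹ := by
      rw [show lam i' - lam i = -(lam i - lam i') by ring, inv_neg]
    rw [hx]
    ring

lemma toda_rowA_cancel1 {i' i : Fin n} (h1 : lam i' - lam i ≠ 0) (h2 : lam i' - lam i + h ≠ 0)
    {D : Finset (Fin n)} (hi : i ∈ D) :
    ((lam i' - lam i + h) * (lam i' - lam i + 2*h)) * todaRow0 lam h i' D
      = todaRow0 lam h i' (D.erase i) * todaCross lam h i' i := by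
  rw [todaRow0, todaRow0, ← Finset.mul_prod_erase _ _ hi, todaCross]
  rw [show ((lam i' - lam i + h) * (lam i' - lam i + 2*h)) *
      ((lam i' - lam i)⁻¹ * (lam i' - lam i + h)⁻¹ * ∏ j ∈ D.erase i,
        ((lam i' - lam j)⁻¹ * (lam i' - lam j + h)⁻¹))
    = ((lam i' - lam i + h) * (lam i' - lam i + h)⁻¹) *
      ((∏ j ∈ D.erase i, ((lam i' - lam j)⁻¹ * (lam i' - lam j + h)⁻¹)) *
        ((lam i' - lam i + 2*h) * (lam i' - lam i)⁻¹)) by ring, mul_inv_cancel₀ h2, one_mul]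

lemma toda_rowB_cancel1 {i' i : Fin n} (h1 : lam i' - lam i ≠ 0) (h2 : lam i' - lam i - h ≠ 0)
    {D : Finset (Fin n)} (hi : i ∈ D) :
    ((lam i' - lam i) * (lam i' - lam i - h)) * todaRow1 lam h i' D
      = todaRow1 lam h i' (D.erase i) := by
  rw [todaRow1, todaRow1, ← Finset.mul_prod_erase _ _ hi]
  rw [show (lam i' - lam i) * (lam i' - lam i - h) *
      ((lam i' - lam i)⁻¹ * (lam i' - lam i - h)⁻¹ * ∏ j ∈ D.erase i,
        ((lam i' - lam j)⁻¹ * (lam i' - lam j - h)⁻¹))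
    = ((lam i' - lam i) * (lam i' - lam i)⁻¹) * ((lam i' - lam i - h) * (lam i' - lam i - h)⁻¹) *
      ∏ j ∈ D.erase i, ((lam i' - lam j)⁻¹ * (lam i' - lam j - h)⁻¹)
    by ring, mul_inv_cancel₀ h1, mul_inv_cancel₀ h2, one_mul, one_mul]


lemma toda_key0 (hh : h ≠ 0) (hdist : ∀ i j : Fin n, i ≠ j → lam i ≠ lam j)
    (hp : ∀ i j : Fin n, i ≠ j → lam i - lam j + h ≠ 0)
    (hm : ∀ i j : Fin n, i ≠ j → lam i - lam j - h ≠ 0)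
    (a : ℕ) (A B : Finset (Fin n)) (i : Fin n) (hi : i ∈ (A ∪ B)ᶜ) :
    todaTer lam h a (insert i A) B
      = h * ((-1)^B.card
          * (∏ i' ∈ A, todaRow0 lam h i' (A ∪ B)ᶜ) * (∏ i' ∈ B, todaRow1 lam h i' (A ∪ B)ᶜ)
          * ∏ i' ∈ A, ∏ j' ∈ B, todaCross lam h i' j')
        * (((lam i + ((∑ i' ∈ A, lam i') + (∑ i' ∈ B, lam i') - (B.card : ℂ) * h))^a
            * (∏ i' ∈ A, ((lam i' - lam i) * (lam i' + h - lam i)))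
            * (∏ i' ∈ B, ((lam i' - h - lam i) * (lam i' - 2*h - lam i))))
          * (h⁻¹ * todaRow0 lam h i ((A ∪ B)ᶜ.erase i))) := by
  have hiAB : i ∉ A ∪ B := Finset.mem_compl.mp hi
  have hiA : i ∉ A := fun hx => hiAB (Finset.mem_union_left _ hx)
  have hiB : i ∉ B := fun hx => hiAB (Finset.mem_union_right _ hx)
  have hE : (insert i A ∪ B)ᶜ = (A ∪ B)ᶜ.erase i := by
    rw [Finset.insert_union, Finset.compl_insert]
  have hne : ∀ i' ∈ A ∪ B, lam i' - lam i ≠ 0 := fun i' hi' =>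
    sub_ne_zero_of_ne (hdist i' i (fun hEq => hiAB (hEq ▸ hi')))
  have hPA : (∏ i' ∈ A, ((lam i' - lam i) * (lam i' + h - lam i)))
      * ∏ i' ∈ A, todaRow0 lam h i' (A ∪ B)ᶜ
      = ∏ i' ∈ A, todaRow0 lam h i' ((A ∪ B)ᶜ.erase i) := by
    rw [← Finset.prod_mul_distrib]
    refine Finset.prod_congr rfl fun i' hi' => ?_
    exact toda_rowA_cancel0 lam h (hne i' (Finset.mem_union_left _ hi'))
      (hp i' i (fun hEq => hiAB (hEq ▸ Finset.mem_union_left _ hi'))) hi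
  have hPB : (∏ i' ∈ B, ((lam i' - h - lam i) * (lam i' - 2*h - lam i)))
      * ∏ i' ∈ B, todaRow1 lam h i' (A ∪ B)ᶜ
      = (∏ i' ∈ B, todaRow1 lam h i' ((A ∪ B)ᶜ.erase i)) * ∏ i' ∈ B, todaCross lam h i i' := by
    rw [← Finset.prod_mul_distrib, ← Finset.prod_mul_distrib]
    refine Finset.prod_congr rfl fun i' hi' => ?_
    exact toda_rowB_cancel0 lam h (hne i' (Finset.mem_union_right _ hi'))
      (hm i' i (fun hEq => hiAB (hEq ▸ Finset.mem_union_right _ hi'))) hi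
  rw [todaTer, hE, Finset.sum_insert hiA, Finset.prod_insert hiA, Finset.prod_insert hiA]
  calc (-1)^B.card * ((lam i + ∑ i' ∈ A, lam i') + (∑ i' ∈ B, lam i') - (B.card : ℂ) * h)^a
        * (todaRow0 lam h i ((A ∪ B)ᶜ.erase i) * ∏ i' ∈ A, todaRow0 lam h i' ((A ∪ B)ᶜ.erase i))
        * (∏ i' ∈ B, todaRow1 lam h i' ((A ∪ B)ᶜ.erase i))
        * ((∏ j' ∈ B, todaCross lam h i j') * ∏ i' ∈ A, ∏ j' ∈ B, todaCross lam h i' j')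
      = (-1)^B.card * ((lam i + ∑ i' ∈ A, lam i') + (∑ i' ∈ B, lam i') - (B.card : ℂ) * h)^a
        * todaRow0 lam h i ((A ∪ B)ᶜ.erase i)
        * (((∏ i' ∈ A, ((lam i' - lam i) * (lam i' + h - lam i)))
            * ∏ i' ∈ A, todaRow0 lam h i' (A ∪ B)ᶜ)
          * ((∏ i' ∈ B, ((lam i' - h - lam i) * (lam i' - 2*h - lam i)))
            * ∏ i' ∈ B, todaRow1 lam h i' (A ∪ B)ᶜ))
        * ∏ i' ∈ A, ∏ j' ∈ B, todaCross lam h i' j' := by rw [hPA, hPB]; ring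
    _ = (h * h⁻¹) * ((-1)^B.card
        * ((lam i + ∑ i' ∈ A, lam i') + (∑ i' ∈ B, lam i') - (B.card : ℂ) * h)^a
        * todaRow0 lam h i ((A ∪ B)ᶜ.erase i)
        * (((∏ i' ∈ A, ((lam i' - lam i) * (lam i' + h - lam i)))
            * ∏ i' ∈ A, todaRow0 lam h i' (A ∪ B)ᶜ)
          * ((∏ i' ∈ B, ((lam i' - h - lam i) * (lam i' - 2*h - lam i)))
            * ∏ i' ∈ B, todaRow1 lam h i' (A ∪ B)ᶜ))
        * ∏ i' ∈ A, ∏ j' ∈ B, todaCross lam h i' j') := by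
        rw [mul_inv_cancel₀ hh, one_mul]
    _ = _ := by
        rw [show lam i + ((∑ i' ∈ A, lam i') + (∑ i' ∈ B, lam i') - (B.card : ℂ) * h)
          = (lam i + ∑ i' ∈ A, lam i') + (∑ i' ∈ B, lam i') - (B.card : ℂ) * h by ring]
        ring

lemma toda_key1 (hh : h ≠ 0) (hdist : ∀ i j : Fin n, i ≠ j → lam i ≠ lam j)
    (hp : ∀ i j : Fin n, i ≠ j → lam i - lam j + h ≠ 0)
    (hm : ∀ i j : Fin n, i ≠ j → lam i - lam j - h ≠ 0)
    (a : ℕ) (A B : Finset (Fin n)) (i : Fin n) (hi : i ∈ (A ∪ B)ᶜ) :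
    todaTer lam h a A (insert i B)
      = h * ((-1)^B.card
          * (∏ i' ∈ A, todaRow0 lam h i' (A ∪ B)ᶜ) * (∏ i' ∈ B, todaRow1 lam h i' (A ∪ B)ᶜ)
          * ∏ i' ∈ A, ∏ j' ∈ B, todaCross lam h i' j')
        * (((lam i - h + ((∑ i' ∈ A, lam i') + (∑ i' ∈ B, lam i') - (B.card : ℂ) * h))^a
            * (∏ i' ∈ A, ((lam i' - (lam i - h)) * (lam i' + h - (lam i - h))))
            * (∏ i' ∈ B, ((lam i' - h - (lam i - h)) * (lam i' - 2*h - (lam i - h)))))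
          * (-h⁻¹ * todaRow1 lam h i ((A ∪ B)ᶜ.erase i))) := by
  have hiAB : i ∉ A ∪ B := Finset.mem_compl.mp hi
  have hiA : i ∉ A := fun hx => hiAB (Finset.mem_union_left _ hx)
  have hiB : i ∉ B := fun hx => hiAB (Finset.mem_union_right _ hx)
  have hE : (A ∪ insert i B)ᶜ = (A ∪ B)ᶜ.erase i := by
    rw [Finset.union_insert, Finset.compl_insert]
  have hne : ∀ i' ∈ A ∪ B, lam i' - lam i ≠ 0 := fun i' hi' =>
    sub_ne_zero_of_ne (hdist i' i (fun hEq => hiAB (hEq ▸ hi')))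
  have cA : (∏ i' ∈ A, ((lam i' - (lam i - h)) * (lam i' + h - (lam i - h))))
      = ∏ i' ∈ A, ((lam i' - lam i + h) * (lam i' - lam i + 2*h)) :=
    Finset.prod_congr rfl fun i' _ => by ring
  have cB : (∏ i' ∈ B, ((lam i' - h - (lam i - h)) * (lam i' - 2*h - (lam i - h))))
      = ∏ i' ∈ B, ((lam i' - lam i) * (lam i' - lam i - h)) :=
    Finset.prod_congr rfl fun i' _ => by ring
  have hPA : (∏ i' ∈ A, ((lam i' - lam i + h) * (lam i' - lam i + 2*h)))
      * ∏ i' ∈ A, todaRow0 lam h i' (A ∪ B)ᶜ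
      = (∏ i' ∈ A, todaRow0 lam h i' ((A ∪ B)ᶜ.erase i)) * ∏ i' ∈ A, todaCross lam h i' i := by
    rw [← Finset.prod_mul_distrib, ← Finset.prod_mul_distrib]
    refine Finset.prod_congr rfl fun i' hi' => ?_
    exact toda_rowA_cancel1 lam h (hne i' (Finset.mem_union_left _ hi'))
      (hp i' i (fun hEq => hiAB (hEq ▸ Finset.mem_union_left _ hi'))) hi
  have hPB : (∏ i' ∈ B, ((lam i' - lam i) * (lam i' - lam i - h)))
      * ∏ i' ∈ B, todaRow1 lam h i' (A ∪ B)ᶜ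
      = ∏ i' ∈ B, todaRow1 lam h i' ((A ∪ B)ᶜ.erase i) := by
    rw [← Finset.prod_mul_distrib]
    refine Finset.prod_congr rfl fun i' hi' => ?_
    exact toda_rowB_cancel1 lam h (hne i' (Finset.mem_union_right _ hi'))
      (hm i' i (fun hEq => hiAB (hEq ▸ Finset.mem_union_right _ hi'))) hi
  have hcross : ∏ i' ∈ A, ∏ j' ∈ insert i B, todaCross lam h i' j'
      = (∏ i' ∈ A, todaCross lam h i' i) * ∏ i' ∈ A, ∏ j' ∈ B, todaCross lam h i' j' := by
    rw [← Finset.prod_mul_distrib]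
    exact Finset.prod_congr rfl fun i' _ => Finset.prod_insert hiB
  rw [todaTer, hE, Finset.card_insert_of_notMem hiB, Finset.sum_insert hiB,
    Finset.prod_insert hiB, hcross, cA, cB]
  rw [show ((∑ i' ∈ A, lam i') + (lam i + ∑ i' ∈ B, lam i') - ((B.card + 1 : ℕ) : ℂ) * h)
    = (lam i - h + ((∑ i' ∈ A, lam i') + (∑ i' ∈ B, lam i') - (B.card : ℂ) * h)) by
      push_cast; ring]
  calc (-1)^(B.card+1)
        * (lam i - h + ((∑ i' ∈ A, lam i') + (∑ i' ∈ B, lam i') - (B.card : ℂ) * h))^a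
        * (∏ i' ∈ A, todaRow0 lam h i' ((A ∪ B)ᶜ.erase i))
        * (todaRow1 lam h i ((A ∪ B)ᶜ.erase i) * ∏ i' ∈ B, todaRow1 lam h i' ((A ∪ B)ᶜ.erase i))
        * ((∏ i' ∈ A, todaCross lam h i' i) * ∏ i' ∈ A, ∏ j' ∈ B, todaCross lam h i' j')
      = (-1)^(B.card+1)
        * (lam i - h + ((∑ i' ∈ A, lam i') + (∑ i' ∈ B, lam i') - (B.card : ℂ) * h))^a
        * todaRow1 lam h i ((A ∪ B)ᶜ.erase i)
        * (((∏ i' ∈ A, ((lam i' - lam i + h) * (lam i' - lam i + 2*h)))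
            * ∏ i' ∈ A, todaRow0 lam h i' (A ∪ B)ᶜ)
          * ((∏ i' ∈ B, ((lam i' - lam i) * (lam i' - lam i - h)))
            * ∏ i' ∈ B, todaRow1 lam h i' (A ∪ B)ᶜ))
        * ∏ i' ∈ A, ∏ j' ∈ B, todaCross lam h i' j' := by rw [hPA, hPB]; ring
    _ = (h * h⁻¹) * ((-1)^(B.card+1)
        * (lam i - h + ((∑ i' ∈ A, lam i') + (∑ i' ∈ B, lam i') - (B.card : ℂ) * h))^a
        * todaRow1 lam h i ((A ∪ B)ᶜ.erase i)
        * (((∏ i' ∈ A, ((lam i' - lam i + h) * (lam i' - lam i + 2*h)))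
            * ∏ i' ∈ A, todaRow0 lam h i' (A ∪ B)ᶜ)
          * ((∏ i' ∈ B, ((lam i' - lam i) * (lam i' - lam i - h)))
            * ∏ i' ∈ B, todaRow1 lam h i' (A ∪ B)ᶜ))
        * ∏ i' ∈ A, ∏ j' ∈ B, todaCross lam h i' j') := by
        rw [mul_inv_cancel₀ hh, one_mul]
    _ = _ := by ring


lemma toda_perpair (hh : h ≠ 0) (hdist : ∀ i j : Fin n, i ≠ j → lam i ≠ lam j)
    (hp : ∀ i j : Fin n, i ≠ j → lam i - lam j + h ≠ 0)
    (hm : ∀ i j : Fin n, i ≠ j → lam i - lam j - h ≠ 0)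
    (a : ℕ) (A B : Finset (Fin n))
    (ha : a + 2*(A.card + B.card) + 2 ≤ 2 * ((A ∪ B)ᶜ.card)) :
    ∑ i ∈ (A ∪ B)ᶜ, (todaTer lam h a (insert i A) B + todaTer lam h a A (insert i B)) = 0 := by
  have hinj : Function.Injective lam := fun x y hxy => by
    by_contra hne; exact hdist x y hne hxy
  have hinj' : Function.Injective (fun j : Fin n => lam j - h) := fun x y hxy =>
    hinj (by linear_combination (norm := ring_nf) hxy)
  set D : Finset (Fin n) := (A ∪ B)ᶜ with hD
  set P : Polynomial ℂ :=
    (Polynomial.X + Polynomial.C ((∑ i ∈ A, lam i) + (∑ i ∈ B, lam i) - (B.card : ℂ) * h))^a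
    * (∏ i' ∈ A, ((Polynomial.C (lam i') - Polynomial.X)
        * (Polynomial.C (lam i' + h) - Polynomial.X)))
    * (∏ i' ∈ B, ((Polynomial.C (lam i' - h) - Polynomial.X)
        * (Polynomial.C (lam i' - 2*h) - Polynomial.X))) with hP
  have heval : ∀ x : ℂ, P.eval x
      = (x + ((∑ i ∈ A, lam i) + (∑ i ∈ B, lam i) - (B.card : ℂ) * h))^a
        * (∏ i' ∈ A, ((lam i' - x) * (lam i' + h - x)))
        * (∏ i' ∈ B, ((lam i' - h - x) * (lam i' - 2*h - x))) := by
    intro x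
    simp only [hP, Polynomial.eval_mul, Polynomial.eval_pow, Polynomial.eval_add,
      Polynomial.eval_X, Polynomial.eval_C, Polynomial.eval_prod, Polynomial.eval_sub]
  have hdegP : P.natDegree ≤ a + 2 * (A.card + B.card) := by
    have h1 : ((Polynomial.X + Polynomial.C ((∑ i ∈ A, lam i) + (∑ i ∈ B, lam i)
        - (B.card : ℂ) * h))^a).natDegree ≤ a := by
      refine le_trans (Polynomial.natDegree_pow_le) ?_
      rw [Polynomial.natDegree_X_add_C]; omega
    have hfac : ∀ (c d : ℂ), ((Polynomial.C c - Polynomial.X)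
        * (Polynomial.C d - Polynomial.X) : Polynomial ℂ).natDegree ≤ 2 := by
      intro c d
      refine le_trans (Polynomial.natDegree_mul_le) ?_
      have : ∀ e : ℂ, (Polynomial.C e - Polynomial.X : Polynomial ℂ).natDegree ≤ 1 := by
        intro e
        refine le_trans (Polynomial.natDegree_sub_le _ _) ?_
        simp
      have hc := this c; have hd := this d; omega
    have h2 : (∏ i' ∈ A, ((Polynomial.C (lam i') - Polynomial.X)
        * (Polynomial.C (lam i' + h) - Polynomial.X))).natDegree ≤ 2 * A.card := by
      refine le_trans (Polynomial.natDegree_prod_le _ _) ?_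
      refine le_trans (Finset.sum_le_sum (fun i' _ => hfac (lam i') (lam i' + h))) ?_
      simp [mul_comm]
    have h3 : (∏ i' ∈ B, ((Polynomial.C (lam i' - h) - Polynomial.X)
        * (Polynomial.C (lam i' - 2*h) - Polynomial.X))).natDegree ≤ 2 * B.card := by
      refine le_trans (Polynomial.natDegree_prod_le _ _) ?_
      refine le_trans (Finset.sum_le_sum (fun i' _ => hfac (lam i' - h) (lam i' - 2*h))) ?_
      simp [mul_comm]
    rw [hP]
    refine le_trans (Polynomial.natDegree_mul_le) ?_
    have h12 := Polynomial.natDegree_mul_le (p :=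
      (Polynomial.X + Polynomial.C ((∑ i ∈ A, lam i) + (∑ i ∈ B, lam i)
        - (B.card : ℂ) * h))^a) (q := ∏ i' ∈ A, ((Polynomial.C (lam i') - Polynomial.X)
        * (Polynomial.C (lam i' + h) - Polynomial.X)))
    omega
  have hdisjN := toda_nodes_disj lam h hh hp D
  have hNcard : (D.image lam ∪ D.image (fun j => lam j - h)).card = 2 * D.card := by
    rw [Finset.card_union_of_disjoint hdisjN, Finset.card_image_of_injective _ hinj,
      Finset.card_image_of_injective _ hinj']
    omega
  have hlag := toda_lagrange_sum_zero (D.image lam ∪ D.image (fun j => lam j - h)) P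
    (by rw [hNcard]; omega)
  rw [Finset.sum_union hdisjN,
    Finset.sum_image (fun x _ y _ hxy => hinj hxy),
    Finset.sum_image (fun x _ y _ hxy => hinj' hxy),
    ← Finset.sum_add_distrib] at hlag
  have hterm : ∀ i ∈ D, todaTer lam h a (insert i A) B + todaTer lam h a A (insert i B)
      = (h * ((-1)^B.card
          * (∏ i' ∈ A, todaRow0 lam h i' D) * (∏ i' ∈ B, todaRow1 lam h i' D)
          * ∏ i' ∈ A, ∏ j' ∈ B, todaCross lam h i' j'))
        * (P.eval (lam i)
            * ∏ y ∈ ((D.image lam ∪ D.image (fun j => lam j - h)).erase (lam i)),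
                (lam i - y)⁻¹
          + P.eval (lam i - h)
            * ∏ y ∈ ((D.image lam ∪ D.image (fun j => lam j - h)).erase (lam i - h)),
                ((lam i - h) - y)⁻¹) := by
    intro i hi
    rw [heval, heval, toda_node_prod0 lam h hh hdist hp D i hi, toda_node_prod1 lam h hh hdist hp D i hi]
    rw [toda_key0 lam h hh hdist hp hm a A B i hi, toda_key1 lam h hh hdist hp hm a A B i hi]
    ring
  rw [Finset.sum_congr rfl hterm, ← Finset.mul_sum, hlag, mul_zero]

lemma toda_rec_step (hh : h ≠ 0) (hdist : ∀ i j : Fin n, i ≠ j → lam i ≠ lam j)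
    (hp : ∀ i j : Fin n, i ≠ j → lam i - lam j + h ≠ 0)
    (hm : ∀ i j : Fin n, i ≠ j → lam i - lam j - h ≠ 0)
    (a p q : ℕ) (ha : a + 4*(p+q) + 2 ≤ 2*n) :
    (p + 1 : ℂ) * todaMsum lam h a (p+1) q + (q + 1 : ℂ) * todaMsum lam h a p (q+1) = 0 := by
  have hzero : ∑ A ∈ powersetCard p (univ : Finset (Fin n)), ∑ B ∈ powersetCard q Aᶜ,
      (∑ i ∈ (A ∪ B)ᶜ, (todaTer lam h a (insert i A) B + todaTer lam h a A (insert i B))) = 0 := by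
    refine Finset.sum_eq_zero fun A hA => Finset.sum_eq_zero fun B hB => ?_
    obtain ⟨hAsub, hcA⟩ := Finset.mem_powersetCard.mp hA
    obtain ⟨hBsub, hcB⟩ := Finset.mem_powersetCard.mp hB
    have hdisj : Disjoint A B := Finset.disjoint_left.mpr
      (fun x hxA hxB => (Finset.mem_compl.mp (hBsub hxB)) hxA)
    apply toda_perpair lam h hh hdist hp hm
    have hU : (A ∪ B).card = p + q := by
      rw [Finset.card_union_of_disjoint hdisj, hcA, hcB]
    have hle : p + q ≤ n := by
      have h1 := Finset.card_le_univ (A ∪ B)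
      rw [hU] at h1; simpa using h1
    have hUc : (A ∪ B)ᶜ.card = n - (p+q) := by
      rw [Finset.card_compl, hU]; simp
    rw [hcA, hcB, hUc]
    omega
  have hsplit : (∑ A ∈ powersetCard p (univ : Finset (Fin n)), ∑ B ∈ powersetCard q Aᶜ,
        ∑ i ∈ (A ∪ B)ᶜ, todaTer lam h a (insert i A) B)
      + (∑ A ∈ powersetCard p (univ : Finset (Fin n)), ∑ B ∈ powersetCard q Aᶜ,
        ∑ i ∈ (A ∪ B)ᶜ, todaTer lam h a A (insert i B)) = 0 := by
    rw [← Finset.sum_add_distrib]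
    rw [← hzero]
    refine Finset.sum_congr rfl fun A _ => ?_
    rw [← Finset.sum_add_distrib]
    refine Finset.sum_congr rfl fun B _ => ?_
    rw [← Finset.sum_add_distrib]
  have hT1 : (∑ A ∈ powersetCard p (univ : Finset (Fin n)), ∑ B ∈ powersetCard q Aᶜ,
      ∑ i ∈ (A ∪ B)ᶜ, todaTer lam h a A (insert i B)) = (q + 1 : ℂ) * todaMsum lam h a p (q+1) := by
    rw [todaMsum, Finset.mul_sum]
    refine Finset.sum_congr rfl fun A hA => ?_
    rw [← toda_insert_sum (Aᶜ) q (fun B => todaTer lam h a A B)]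
    refine Finset.sum_congr rfl fun B hB => ?_
    congr 1
    rw [Finset.compl_union]
    ext x; simp [Finset.mem_sdiff, and_comm]
  have hT0 : (∑ A ∈ powersetCard p (univ : Finset (Fin n)), ∑ B ∈ powersetCard q Aᶜ,
      ∑ i ∈ (A ∪ B)ᶜ, todaTer lam h a (insert i A) B) = (p + 1 : ℂ) * todaMsum lam h a (p+1) q := by
    rw [toda_swap_sum p q (fun A B => ∑ i ∈ (A ∪ B)ᶜ, todaTer lam h a (insert i A) B),
      todaMsum, toda_swap_sum (p+1) q (fun A B => todaTer lam h a A B), Finset.mul_sum]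
    refine Finset.sum_congr rfl fun B hB => ?_
    rw [← toda_insert_sum (Bᶜ) p (fun A => todaTer lam h a A B)]
    refine Finset.sum_congr rfl fun A hA => ?_
    congr 1
    rw [Finset.compl_union]
    ext x; simp [Finset.mem_sdiff, and_comm]
  rw [← hT0, ← hT1]
  exact hsplit

lemma toda_chain (hh : h ≠ 0) (hdist : ∀ i j : Fin n, i ≠ j → lam i ≠ lam j)
    (hp : ∀ i j : Fin n, i ≠ j → lam i - lam j + h ≠ 0)
    (hm : ∀ i j : Fin n, i ≠ j → lam i - lam j - h ≠ 0)
    (a k : ℕ) (ha : a + 4*k ≤ 2*n + 2) :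
    ∀ q, q ≤ k → todaMsum lam h a (k-q) q
      = (-1)^q * ((k.choose q : ℕ) : ℂ) * todaMsum lam h a k 0 := by
  intro q
  induction q with
  | zero => intro _; simp
  | succ q ih =>
    intro hqk
    have hIH := ih (by omega)
    have hr := toda_rec_step lam h hh hdist hp hm a (k-(q+1)) q (by omega)
    have he : k - (q+1) + 1 = k - q := by omega
    rw [he, hIH] at hr
    have hc1 : ((k - (q+1) : ℕ) : ℂ) + 1 = ((k - q : ℕ) : ℂ) := by
      rw [← he]; push_cast; ring
    rw [hc1] at hr
    have hcc : ((k.choose (q+1) : ℕ) : ℂ) * ((q : ℂ) + 1)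
        = ((k.choose q : ℕ) : ℂ) * ((k - q : ℕ) : ℂ) := by
      have := Nat.choose_succ_right_eq k q
      exact_mod_cast congrArg (fun m : ℕ => (m : ℂ)) this
    have hq1 : ((q : ℂ) + 1) ≠ 0 := by
      have hz : ((q+1 : ℕ) : ℂ) ≠ 0 := Nat.cast_ne_zero.mpr (Nat.succ_ne_zero q)
      push_cast at hz; exact hz
    have hmul : ((q : ℂ) + 1) * todaMsum lam h a (k-(q+1)) (q+1)
        = ((q : ℂ) + 1) * ((-1)^(q+1) * ((k.choose (q+1) : ℕ) : ℂ) * todaMsum lam h a k 0) := by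
      linear_combination hr + ((-1)^q * todaMsum lam h a k 0) * hcc
    exact mul_left_cancel₀ hq1 hmul

end TodaAux

/-- Lemma 4 of the paper (case k < n/2): the sum over k-element subsets `K` of
`{1,…,n}` of products of reciprocals of differences, with shifts by `h`,
vanishes for `a ≤ 2(n − 2k + 1)`. -/
theorem toda_lemma4 (n k : ℕ) (lam : Fin n → ℂ) (h : ℂ) (hh : h ≠ 0)
    (hdist : ∀ i j : Fin n, i ≠ j → lam i ≠ lam j)
    (hp : ∀ i j : Fin n, i ≠ j → lam i - lam j + h ≠ 0)
    (hm : ∀ i j : Fin n, i ≠ j → lam i - lam j - h ≠ 0)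
    (hk : 2 * k < n)
    (a : ℕ) (ha : a ≤ 2 * (n - 2 * k + 1)) :
    ∑ K ∈ powersetCard k (univ : Finset (Fin n)),
      (∏ i ∈ K, ∏ j ∈ Kᶜ, (lam i - lam j)⁻¹) *
        ((∑ i ∈ K, lam i) ^ a * (∏ i ∈ K, ∏ j ∈ Kᶜ, (lam i - lam j + h)⁻¹)
          - ((∑ i ∈ K, lam i) - (k : ℂ) * h) ^ a *
              (∏ i ∈ K, ∏ j ∈ Kᶜ, (lam i - lam j - h)⁻¹)) = 0 := by
  have ha' : a + 4*k ≤ 2*n + 2 := by omega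
  have hchain := toda_chain lam h hh hdist hp hm a k ha' k le_rfl
  rw [Nat.sub_self, Nat.choose_self] at hchain
  have h1 : todaMsum lam h a k 0 = ∑ K ∈ powersetCard k (univ : Finset (Fin n)),
      (∏ i ∈ K, ∏ j ∈ Kᶜ, (lam i - lam j)⁻¹) *
        ((∑ i ∈ K, lam i) ^ a * ∏ i ∈ K, ∏ j ∈ Kᶜ, (lam i - lam j + h)⁻¹) := by
    rw [todaMsum]
    refine Finset.sum_congr rfl fun K hK => ?_
    rw [Finset.powersetCard_zero, Finset.sum_singleton, todaTer]
    simp only [Finset.card_empty, pow_zero, one_mul, Finset.sum_empty, add_zero,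
      Nat.cast_zero, zero_mul, sub_zero, Finset.union_empty, Finset.prod_empty, mul_one,
      Finset.prod_const_one]
    have hrw : (∏ i ∈ K, todaRow0 lam h i Kᶜ)
        = (∏ i ∈ K, ∏ j ∈ Kᶜ, (lam i - lam j)⁻¹)
          * ∏ i ∈ K, ∏ j ∈ Kᶜ, (lam i - lam j + h)⁻¹ := by
      rw [← Finset.prod_mul_distrib]
      exact Finset.prod_congr rfl fun i _ => by rw [todaRow0, Finset.prod_mul_distrib]
    rw [hrw]; ring
  have h2 : todaMsum lam h a 0 k = (-1)^k * ∑ K ∈ powersetCard k (univ : Finset (Fin n)),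
      (∏ i ∈ K, ∏ j ∈ Kᶜ, (lam i - lam j)⁻¹) *
        (((∑ i ∈ K, lam i) - (k : ℂ) * h) ^ a
          * ∏ i ∈ K, ∏ j ∈ Kᶜ, (lam i - lam j - h)⁻¹) := by
    rw [todaMsum, Finset.powersetCard_zero, Finset.sum_singleton, Finset.compl_empty,
      Finset.mul_sum]
    refine Finset.sum_congr rfl fun K hK => ?_
    have hcK : K.card = k := (Finset.mem_powersetCard.mp hK).2
    rw [todaTer, hcK]
    simp only [Finset.sum_empty, zero_add, Finset.empty_union, Finset.prod_empty, one_mul,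
      mul_one]
    have hrw : (∏ i ∈ K, todaRow1 lam h i Kᶜ)
        = (∏ i ∈ K, ∏ j ∈ Kᶜ, (lam i - lam j)⁻¹)
          * ∏ i ∈ K, ∏ j ∈ Kᶜ, (lam i - lam j - h)⁻¹ := by
      rw [← Finset.prod_mul_distrib]
      exact Finset.prod_congr rfl fun i _ => by rw [todaRow1, Finset.prod_mul_distrib]
    rw [hrw]; ring
  have hsplit : ∑ K ∈ powersetCard k (univ : Finset (Fin n)),
      (∏ i ∈ K, ∏ j ∈ Kᶜ, (lam i - lam j)⁻¹) *
        ((∑ i ∈ K, lam i) ^ a * (∏ i ∈ K, ∏ j ∈ Kᶜ, (lam i - lam j + h)⁻¹)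
          - ((∑ i ∈ K, lam i) - (k : ℂ) * h) ^ a *
              (∏ i ∈ K, ∏ j ∈ Kᶜ, (lam i - lam j - h)⁻¹))
      = (∑ K ∈ powersetCard k (univ : Finset (Fin n)),
          (∏ i ∈ K, ∏ j ∈ Kᶜ, (lam i - lam j)⁻¹) *
            ((∑ i ∈ K, lam i) ^ a * ∏ i ∈ K, ∏ j ∈ Kᶜ, (lam i - lam j + h)⁻¹))
        - ∑ K ∈ powersetCard k (univ : Finset (Fin n)),
          (∏ i ∈ K, ∏ j ∈ Kᶜ, (lam i - lam j)⁻¹) *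
            (((∑ i ∈ K, lam i) - (k : ℂ) * h) ^ a
              * ∏ i ∈ K, ∏ j ∈ Kᶜ, (lam i - lam j - h)⁻¹) := by
    rw [← Finset.sum_sub_distrib]
    exact Finset.sum_congr rfl fun K _ => by ring
  rw [hsplit, ← h1]
  have hneg : ((-1 : ℂ))^k * ((-1 : ℂ))^k = 1 := by
    rw [← mul_pow]; norm_num
  have h2' : ∑ K ∈ powersetCard k (univ : Finset (Fin n)),
      (∏ i ∈ K, ∏ j ∈ Kᶜ, (lam i - lam j)⁻¹) *
        (((∑ i ∈ K, lam i) - (k : ℂ) * h) ^ a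
          * ∏ i ∈ K, ∏ j ∈ Kᶜ, (lam i - lam j - h)⁻¹)
      = (-1 : ℂ)^k * todaMsum lam h a 0 k := by
    rw [h2]
    linear_combination (-(∑ K ∈ powersetCard k (univ : Finset (Fin n)),
      (∏ i ∈ K, ∏ j ∈ Kᶜ, (lam i - lam j)⁻¹) *
        (((∑ i ∈ K, lam i) - (k : ℂ) * h) ^ a
          * ∏ i ∈ K, ∏ j ∈ Kᶜ, (lam i - lam j - h)⁻¹))) * hneg
  rw [h2', hchain]
  linear_combination (-(todaMsum lam h a k 0)) * hneg
end

section
/- The case a = 0 of the subset identity: for pairwise distinct complex numbers λ_1,...,λ_n, nonzero h with λ_i − λ_j ± h ≠ 0 for i ≠ j, and any 1 ≤ k ≤ n−1, the sum over all k-element subsets K of {1,...,n} of ∏_{i∈K, j∉K} 1/((λ_i − λ_j)(λ_i − λ_j + h)) equals the sum over all k-element subsets K of ∏_{i∈K, j∉K} 1/((λ_i − λ_j)(λ_i − λ_j − h)). -/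
/-!
Write `F_k(S, h)` for the sum over `k`-subsets `K ⊆ S` of
`∏_{i ∈ K, j ∈ S \ K} 1 / ((λ_i - λ_j) (λ_i - λ_j + h))`, so that the right-hand side is
`F_k(S, -h)`.

For generic `h` (no two `λ`'s differ by `0, ±h, ±2h`) argue by induction on `S`. Fix `p ∈ S` and
regard `λ_p` as a variable `X`. Multiplying every term by
`∏_{j ≠ p} (X - λ_j)(X - λ_j + h)(X - λ_j - h)`, which is invariant under `h ↦ -h`, turns it into
a polynomial of degree `< 3 (|S| - 1)`. The `h`-sum and the `(-h)`-sum of these polynomials agree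
at the `3 (|S| - 1)` distinct nodes `λ_q, λ_q ± h`, `q ≠ p`. At `λ_q` both vanish: the terms with
`p`, `q` on the same side of the cut vanish and the others cancel in pairs `J ∪ {p}`, `J ∪ {q}`.
At `λ_q - h` the `h`-sum keeps only the terms with `p ∈ K ∌ q` and the `(-h)`-sum only those with
`q ∈ K ∌ p`; they add up to `c · F_{k-1}(S \ {p, q}, h)` and `c · F_{k-1}(S \ {p, q}, -h)` with the
same `c`, equal by induction. Symmetrically at `λ_q + h`. So the two polynomials coincide, and
evaluating at `X = λ_p` gives the identity. Finally, both sides are continuous in `h` and only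
finitely many `h` are not generic.
-/

open Finset Polynomial

namespace TodaSubsetIdentity

variable {ι : Type*}

section Definitions

variable (x : ι → ℂ) (h : ℂ)

noncomputable def pairWeight (i j : ι) : ℂ := ((x i - x j) * (x i - x j + h))⁻¹

/-- Makes the interpolation nodes `x i + t * h`, `t ∈ {-1, 0, 1}`, pairwise distinct. -/
def Separated : Prop := Pairwise fun i j => ∀ m : ℤ, |m| ≤ 2 → x i - x j ≠ m * h

noncomputable def nodeCubic (j : ι) : ℂ[X] :=
  (X - C (x j)) * (X - C (x j - h)) * (X - C (x j + h))

variable [DecidableEq ι]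

noncomputable def cutProduct (S K : Finset ι) : ℂ := ∏ i ∈ K, ∏ j ∈ S \ K, pairWeight x h i j

noncomputable def cutSum (S : Finset ι) (k : ℕ) : ℂ := ∑ K ∈ S.powersetCard k, cutProduct x h S K

noncomputable def linkWeight (K : Finset ι) (p j : ι) : ℂ :=
  if p ∈ K then (if j ∈ K then 1 else pairWeight x h p j)
  else if j ∈ K then pairWeight x h j p else 1

noncomputable def linkPoly (K : Finset ι) (p j : ι) : ℂ[X] :=
  if (j ∈ K ↔ p ∈ K) then nodeCubic x h j
  else if p ∈ K then X - C (x j + h) else X - C (x j - h)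

/-- `cutProduct x h S K` with `x p` replaced by `X` and multiplied by `∏_{j ≠ p} nodeCubic x h j`,
which clears its poles in `X`. -/
noncomputable def clearedPoly (S K : Finset ι) (p : ι) : ℂ[X] :=
  C (cutProduct x h (S.erase p) (K.erase p)) * ∏ j ∈ S.erase p, linkPoly x h K p j

end Definitions

variable {x : ι → ℂ} {h : ℂ}

namespace Separated

theorem sub_ne_zero (hs : Separated x h) {i j : ι} (hij : i ≠ j) : x i - x j ≠ 0 := by
  simpa using hs hij 0 (by norm_num)

theorem sub_add_ne_zero (hs : Separated x h) {i j : ι} (hij : i ≠ j) : x i - x j + h ≠ 0 :=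
  fun H => hs hij (-1) (by norm_num) (by push_cast; linear_combination H)

theorem sub_sub_ne_zero (hs : Separated x h) {i j : ι} (hij : i ≠ j) : x i - x j - h ≠ 0 :=
  fun H => hs hij 1 (by norm_num) (by push_cast; linear_combination H)

theorem neg (hs : Separated x h) : Separated x (-h) := fun i j hij m hm => by
  simpa using hs hij (-m) (by rwa [abs_neg])

theorem injective_node (hs : Separated x h) (hh : h ≠ 0) (T : Finset ι) :
    Function.Injective fun a : T × Fin 3 => x a.1 + ((a.2 : ℕ) - 1 : ℂ) * h := by
  rintro ⟨i, s⟩ ⟨j, t⟩ hij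
  simp only at hij
  by_cases hij' : (i : ι) = j
  · have hst : ((s : ℕ) : ℂ) = (t : ℕ) := by
      linear_combination mul_right_cancel₀ hh (add_left_cancel (hij' ▸ hij))
    rw [Subtype.ext hij', Fin.ext (Nat.cast_injective hst)]
  · refine absurd ?_ (hs hij' ((t : ℕ) - (s : ℕ) : ℤ) (abs_le.2 ⟨by omega, by omega⟩))
    push_cast
    linear_combination hij

end Separated

open Filter Topology in
theorem eventually_nhdsNE_separated [Finite ι] (hx : Function.Injective x) (a : ℂ) :
    ∀ᶠ z in 𝓝[≠] a, z ≠ 0 ∧ Separated x z := by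
  refine nhdsNE_le_cofinite a <| mem_cofinite.2 <| ((Set.finite_range
    fun b : ι × ι × Set.Icc (-2 : ℤ) 2 => (x b.1 - x b.2.1) / (b.2.2 : ℤ)).insert 0).subset
    fun z hz => ?_
  have hz : z = 0 ∨ ¬Separated x z := by simpa [or_iff_not_imp_left] using hz
  rcases hz with rfl | hz
  · exact Set.mem_insert _ _
  simp only [Separated, Pairwise, not_forall, not_not] at hz
  obtain ⟨i, j, hij, m, hm, hz⟩ := hz
  have hm0 : (m : ℂ) ≠ 0 := fun hm0 => hij (hx (sub_eq_zero.1 (by rw [hz, hm0, zero_mul])))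
  refine Set.mem_insert_of_mem _ ⟨(i, j, ⟨m, abs_le.1 hm⟩), ?_⟩
  simp only [hz]
  field_simp

theorem nodeCubic_neg (j : ι) : nodeCubic x (-h) j = nodeCubic x h j := by
  simp only [nodeCubic, sub_neg_eq_add, ← sub_eq_add_neg]
  ring

theorem eval_nodeCubic_ne_zero (hs : Separated x h) {i j : ι} (hij : i ≠ j) :
    eval (x i) (nodeCubic x h j) ≠ 0 := by
  simp only [nodeCubic, eval_mul, eval_sub, eval_X, eval_C]
  refine mul_ne_zero (mul_ne_zero (hs.sub_ne_zero hij) ?_) ?_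
  · convert hs.sub_add_ne_zero hij using 1; ring
  · convert hs.sub_sub_ne_zero hij using 1; ring

theorem natDegree_nodeCubic (j : ι) : (nodeCubic x h j).natDegree ≤ 3 := by
  unfold nodeCubic
  compute_degree

variable [DecidableEq ι]

theorem sum_powersetCard_succ_ite {β : Type*} [AddCommMonoid β] {S : Finset ι} {p q : ι}
    (hp : p ∈ S) (hpq : p ≠ q) (k : ℕ) (f : Finset ι → β) :
    ∑ K ∈ S.powersetCard (k + 1), (if p ∈ K ∧ q ∉ K then f K else 0) =
      ∑ J ∈ ((S.erase p).erase q).powersetCard k, f (insert p J) := by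
  rw [← sum_filter]
  refine (sum_nbij' (insert p) (fun K => K.erase p) ?_ ?_ ?_ ?_ fun _ _ => rfl).symm
  · intro J hJ
    rw [mem_powersetCard, subset_erase, subset_erase] at hJ
    rw [mem_filter, mem_powersetCard, card_insert_of_notMem hJ.1.1.2, hJ.2]
    grind
  · intro K hK
    rw [mem_filter, mem_powersetCard] at hK
    rw [mem_powersetCard, subset_erase, subset_erase, card_erase_of_mem hK.2.1, hK.1.2]
    grind
  · intro J hJ
    rw [mem_powersetCard, subset_erase, subset_erase] at hJ
    exact erase_insert hJ.1.1.2
  · intro K hK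
    exact insert_erase (mem_filter.1 hK).2.1

theorem erase_erase_insert_left {S J : Finset ι} {p q : ι} (hJ : J ⊆ (S.erase p).erase q) :
    ((insert p J).erase p).erase q = J := by
  rw [subset_erase, subset_erase] at hJ
  rw [erase_insert hJ.1.2, erase_eq_of_notMem hJ.2]

theorem erase_erase_insert_right {S J : Finset ι} {p q : ι} (hJ : J ⊆ (S.erase p).erase q) :
    ((insert q J).erase p).erase q = J := by
  rw [subset_erase, subset_erase] at hJ
  rw [erase_right_comm, erase_insert hJ.2, erase_eq_of_notMem hJ.1.2]

theorem cutProduct_eq_one {S K : Finset ι} (hK : K = ∅ ∨ S ⊆ K) : cutProduct x h S K = 1 := by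
  rcases hK with rfl | hSK
  · exact prod_empty
  · rw [cutProduct, sdiff_eq_empty_iff_subset.2 hSK]
    exact prod_eq_one fun _ _ => prod_empty

theorem cutProduct_eq_mul_prod_linkWeight {S K : Finset ι} {p : ι} (hp : p ∈ S) (hK : K ⊆ S) :
    cutProduct x h S K =
      cutProduct x h (S.erase p) (K.erase p) * ∏ j ∈ S.erase p, linkWeight x h K p j := by
  by_cases hpK : p ∈ K
  · have hlink : ∏ j ∈ S.erase p, linkWeight x h K p j = ∏ j ∈ S \ K, pairWeight x h p j := by
      simp only [linkWeight, if_pos hpK]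
      rw [prod_ite, prod_const_one, one_mul]
      congr 1
      ext j
      simp only [mem_filter, mem_erase, mem_sdiff]
      grind
    have hcut : S.erase p \ K.erase p = S \ K := by
      rw [← erase_sdiff_distrib, erase_eq_of_notMem fun h => (mem_sdiff.1 h).2 hpK]
    rw [hlink, cutProduct, cutProduct, hcut, ← mul_prod_erase K _ hpK, mul_comm]
  · have hlink : ∏ j ∈ S.erase p, linkWeight x h K p j = ∏ j ∈ K, pairWeight x h j p := by
      simp only [linkWeight, if_neg hpK, ← prod_filter]
      congr 1
      ext j
      simp only [mem_filter, mem_erase]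
      grind
    have hpSK : p ∈ S \ K := mem_sdiff.2 ⟨hp, hpK⟩
    rw [hlink, cutProduct, cutProduct, erase_eq_of_notMem hpK, erase_sdiff_comm,
      ← prod_mul_distrib]
    exact prod_congr rfl fun i _ => by rw [← mul_prod_erase _ _ hpSK, mul_comm]

theorem linkWeight_mul_eval_nodeCubic (hs : Separated x h) (K : Finset ι) {p j : ι}
    (hjp : j ≠ p) :
    linkWeight x h K p j * eval (x p) (nodeCubic x h j) = eval (x p) (linkPoly x h K p j) := by
  have := hs.sub_ne_zero hjp
  have := hs.sub_ne_zero hjp.symm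
  have := hs.sub_add_ne_zero hjp
  have := hs.sub_add_ne_zero hjp.symm
  unfold linkWeight linkPoly
  split_ifs <;> first | tauto | rw [one_mul] |
    (simp only [nodeCubic, pairWeight, eval_mul, eval_sub, eval_X, eval_C]; field_simp; ring1)

theorem linkWeight_mul_eval_linkPoly_node (hs : Separated x h) {K : Finset ι} {p q j : ι}
    (hpq : p ∈ K ↔ q ∉ K) (hjp : j ≠ p) (hjq : j ≠ q) :
    linkWeight x h (K.erase p) q j * eval (x q) (linkPoly x h K p j) =
      x q - x j + if j ∈ K then h else -h := by
  have := hs.sub_ne_zero hjq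
  have := hs.sub_ne_zero hjq.symm
  have := hs.sub_add_ne_zero hjq
  have := hs.sub_add_ne_zero hjq.symm
  have hqp : q ≠ p := by rintro rfl; tauto
  simp only [linkWeight, linkPoly, nodeCubic, pairWeight, mem_erase, hjp, hqp, ne_eq,
    not_false_eq_true, true_and]
  split_ifs <;> first | tauto |
    (simp only [eval_mul, eval_sub, eval_X, eval_C, one_mul]; first | ring1 | (field_simp; ring1))

theorem linkWeight_mul_eval_linkPoly_node_sub (hs : Separated x h) {K : Finset ι} {p q j : ι}
    (hp : p ∈ K) (hq : q ∉ K) (hjp : j ≠ p) (hjq : j ≠ q) :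
    linkWeight x h (K.erase p) q j * eval (x q - h) (linkPoly x h K p j) =
      x q - x j - 2 * h := by
  have := hs.sub_ne_zero hjq
  have := hs.sub_add_ne_zero hjq
  simp only [linkWeight, linkPoly, nodeCubic, pairWeight, mem_erase, hjp, hp, hq, ne_eq,
    not_false_eq_true, true_and]
  split_ifs <;> first | tauto |
    (simp only [eval_mul, eval_sub, eval_X, eval_C, one_mul]; first | ring1 | (field_simp; ring1))

theorem linkWeight_mul_eval_linkPoly_node_add (hs : Separated x h) {K : Finset ι} {p q j : ι}
    (hp : p ∉ K) (hq : q ∈ K) (hjp : j ≠ p) (hjq : j ≠ q) :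
    linkWeight x h (K.erase p) q j * eval (x q + h) (linkPoly x h K p j) =
      x q - x j + 2 * h := by
  have := hs.sub_ne_zero hjq.symm
  have := hs.sub_add_ne_zero hjq.symm
  have hqp : q ≠ p := by rintro rfl; tauto
  simp only [linkWeight, linkPoly, nodeCubic, pairWeight, mem_erase, hjp, hp, hq, hqp, ne_eq,
    not_false_eq_true, true_and]
  split_ifs <;> first | tauto |
    (simp only [eval_mul, eval_sub, eval_X, eval_C, one_mul]; first | ring1 | (field_simp; ring1))

theorem eval_clearedPoly_self (hs : Separated x h) {S K : Finset ι} {p : ι} (hp : p ∈ S)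
    (hK : K ⊆ S) :
    eval (x p) (clearedPoly x h S K p) =
      cutProduct x h S K * ∏ j ∈ S.erase p, eval (x p) (nodeCubic x h j) := by
  rw [cutProduct_eq_mul_prod_linkWeight hp hK, clearedPoly, eval_mul, eval_C, eval_prod,
    mul_assoc, ← prod_mul_distrib]
  congr 1
  exact prod_congr rfl fun j hj => (linkWeight_mul_eval_nodeCubic hs K (ne_of_mem_erase hj)).symm

theorem eval_sum_clearedPoly_self (hs : Separated x h) {S : Finset ι} {p : ι} (hp : p ∈ S)
    (k : ℕ) :
    eval (x p) (∑ K ∈ S.powersetCard k, clearedPoly x h S K p) =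
      cutSum x h S k * ∏ j ∈ S.erase p, eval (x p) (nodeCubic x h j) := by
  rw [eval_finsetSum, cutSum, sum_mul]
  exact sum_congr rfl fun K hK => eval_clearedPoly_self hs hp (mem_powersetCard.1 hK).1

theorem eval_clearedPoly_eq {S K : Finset ι} {p q : ι} (hq : q ∈ S.erase p) (hK : K ⊆ S)
    (y : ℂ) :
    eval y (clearedPoly x h S K p) = eval y (linkPoly x h K p q) *
      (cutProduct x h ((S.erase p).erase q) ((K.erase p).erase q) *
        ∏ j ∈ (S.erase p).erase q,
          linkWeight x h (K.erase p) q j * eval y (linkPoly x h K p j)) := by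
  rw [clearedPoly, eval_mul, eval_C, eval_prod,
    cutProduct_eq_mul_prod_linkWeight hq (erase_subset_erase p hK), ← mul_prod_erase _ _ hq,
    prod_mul_distrib]
  ring

section Nodes

variable {S J : Finset ι} {p q : ι}

theorem eval_clearedPoly_node_eq_zero (hq : q ∈ S.erase p) {K : Finset ι} (hK : K ⊆ S)
    (hpq : q ∈ K ↔ p ∈ K) : eval (x q) (clearedPoly x h S K p) = 0 := by
  rw [eval_clearedPoly_eq hq hK, linkPoly, if_pos hpq]
  simp [nodeCubic]

theorem eval_clearedPoly_node_sub_eq_zero (hq : q ∈ S.erase p) {K : Finset ι} (hK : K ⊆ S)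
    (hpq : ¬(p ∈ K ∧ q ∉ K)) : eval (x q - h) (clearedPoly x h S K p) = 0 := by
  rw [eval_clearedPoly_eq hq hK, linkPoly]
  split_ifs <;> simp_all [nodeCubic]

theorem eval_clearedPoly_node_add_eq_zero (hq : q ∈ S.erase p) {K : Finset ι} (hK : K ⊆ S)
    (hpq : ¬(q ∈ K ∧ p ∉ K)) : eval (x q + h) (clearedPoly x h S K p) = 0 := by
  rw [eval_clearedPoly_eq hq hK, linkPoly]
  split_ifs <;> simp_all [nodeCubic]

theorem eval_clearedPoly_insert_left_node (hs : Separated x h) (hp : p ∈ S) (hq : q ∈ S.erase p)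
    (hJ : J ⊆ (S.erase p).erase q) :
    eval (x q) (clearedPoly x h S (insert p J) p) = -h * (cutProduct x h ((S.erase p).erase q) J *
      ∏ j ∈ (S.erase p).erase q, (x q - x j + if j ∈ J then h else -h)) := by
  have hJ' := hJ
  rw [subset_erase, subset_erase] at hJ'
  have hqK : q ∉ insert p J := by simp [(ne_of_mem_erase hq), hJ'.2]
  have hKS : insert p J ⊆ S := insert_subset hp hJ'.1.1
  rw [eval_clearedPoly_eq hq hKS, erase_erase_insert_left hJ]
  congr 1
  · simp [linkPoly, hqK]
  · congr 1
    refine prod_congr rfl fun j hj => ?_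
    obtain ⟨hjq, hjp, -⟩ : j ≠ q ∧ j ≠ p ∧ j ∈ S := by simpa using hj
    rw [linkWeight_mul_eval_linkPoly_node hs (by simp [hqK]) hjp hjq]
    simp [hjp]

theorem eval_clearedPoly_insert_right_node (hs : Separated x h) (hq : q ∈ S.erase p)
    (hJ : J ⊆ (S.erase p).erase q) :
    eval (x q) (clearedPoly x h S (insert q J) p) = h * (cutProduct x h ((S.erase p).erase q) J *
      ∏ j ∈ (S.erase p).erase q, (x q - x j + if j ∈ J then h else -h)) := by
  have hJ' := hJ
  rw [subset_erase, subset_erase] at hJ'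
  have hpK : p ∉ insert q J := by simp [(ne_of_mem_erase hq).symm, hJ'.1.2]
  have hKS : insert q J ⊆ S := insert_subset (mem_of_mem_erase hq) hJ'.1.1
  rw [eval_clearedPoly_eq hq hKS, erase_erase_insert_right hJ]
  congr 1
  · simp [linkPoly, hpK]
  · congr 1
    refine prod_congr rfl fun j hj => ?_
    obtain ⟨hjq, hjp, -⟩ : j ≠ q ∧ j ≠ p ∧ j ∈ S := by simpa using hj
    rw [linkWeight_mul_eval_linkPoly_node hs (by simp [hpK]) hjp hjq]
    simp [hjq]

theorem eval_clearedPoly_insert_left_node_sub (hs : Separated x h) (hp : p ∈ S)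
    (hq : q ∈ S.erase p) (hJ : J ⊆ (S.erase p).erase q) :
    eval (x q - h) (clearedPoly x h S (insert p J) p) =
      -(2 * h) * (cutProduct x h ((S.erase p).erase q) J *
        ∏ j ∈ (S.erase p).erase q, (x q - x j - 2 * h)) := by
  have hJ' := hJ
  rw [subset_erase, subset_erase] at hJ'
  have hqK : q ∉ insert p J := by simp [(ne_of_mem_erase hq), hJ'.2]
  have hKS : insert p J ⊆ S := insert_subset hp hJ'.1.1
  rw [eval_clearedPoly_eq hq hKS, erase_erase_insert_left hJ]
  congr 1
  · simp [linkPoly, hqK]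
    ring
  · congr 1
    refine prod_congr rfl fun j hj => ?_
    obtain ⟨hjq, hjp, -⟩ : j ≠ q ∧ j ≠ p ∧ j ∈ S := by simpa using hj
    exact linkWeight_mul_eval_linkPoly_node_sub hs (mem_insert_self p J) hqK hjp hjq

theorem eval_clearedPoly_insert_right_node_add (hs : Separated x h) (hq : q ∈ S.erase p)
    (hJ : J ⊆ (S.erase p).erase q) :
    eval (x q + h) (clearedPoly x h S (insert q J) p) =
      2 * h * (cutProduct x h ((S.erase p).erase q) J *
        ∏ j ∈ (S.erase p).erase q, (x q - x j + 2 * h)) := by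
  have hJ' := hJ
  rw [subset_erase, subset_erase] at hJ'
  have hpK : p ∉ insert q J := by simp [(ne_of_mem_erase hq).symm, hJ'.1.2]
  have hKS : insert q J ⊆ S := insert_subset (mem_of_mem_erase hq) hJ'.1.1
  rw [eval_clearedPoly_eq hq hKS, erase_erase_insert_right hJ]
  congr 1
  · simp [linkPoly, hpK]
    ring
  · congr 1
    refine prod_congr rfl fun j hj => ?_
    obtain ⟨hjq, hjp, -⟩ : j ≠ q ∧ j ≠ p ∧ j ∈ S := by simpa using hj
    exact linkWeight_mul_eval_linkPoly_node_add hs hpK (mem_insert_self q J) hjp hjq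

theorem sum_eval_clearedPoly_node (hs : Separated x h) (hp : p ∈ S) (hq : q ∈ S.erase p)
    (k : ℕ) : ∑ K ∈ S.powersetCard (k + 1), eval (x q) (clearedPoly x h S K p) = 0 := by
  have hpq : p ≠ q := (ne_of_mem_erase hq).symm
  have hsplit : ∀ K ∈ S.powersetCard (k + 1), eval (x q) (clearedPoly x h S K p) =
      (if p ∈ K ∧ q ∉ K then eval (x q) (clearedPoly x h S K p) else 0) +
        (if q ∈ K ∧ p ∉ K then eval (x q) (clearedPoly x h S K p) else 0) := by
    intro K hK
    have hKS := (mem_powersetCard.1 hK).1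
    by_cases hpK : p ∈ K <;> by_cases hqK : q ∈ K <;> simp only [hpK, hqK, not_true,
      not_false_eq_true, and_true, and_false, if_true, if_false, add_zero, zero_add] <;>
      exact eval_clearedPoly_node_eq_zero hq hKS (by tauto)
  rw [sum_congr rfl hsplit, sum_add_distrib, sum_powersetCard_succ_ite hp hpq,
    sum_powersetCard_succ_ite (mem_of_mem_erase hq) hpq.symm, erase_right_comm (a := q),
    ← sum_add_distrib]
  refine sum_eq_zero fun J hJ => ?_
  rw [eval_clearedPoly_insert_left_node hs hp hq (mem_powersetCard.1 hJ).1,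
    eval_clearedPoly_insert_right_node hs hq (mem_powersetCard.1 hJ).1]
  ring

theorem sum_eval_clearedPoly_node_sub (hs : Separated x h) (hp : p ∈ S) (hq : q ∈ S.erase p)
    (k : ℕ) :
    ∑ K ∈ S.powersetCard (k + 1), eval (x q - h) (clearedPoly x h S K p) =
      -(2 * h) * (∏ j ∈ (S.erase p).erase q, (x q - x j - 2 * h)) *
        cutSum x h ((S.erase p).erase q) k := by
  have hpq : p ≠ q := (ne_of_mem_erase hq).symm
  rw [← sum_congr rfl fun K hK => ite_eq_left_iff.2 fun hK' =>
      (eval_clearedPoly_node_sub_eq_zero hq (mem_powersetCard.1 hK).1 hK').symm,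
    sum_powersetCard_succ_ite hp hpq, cutSum, mul_sum]
  refine sum_congr rfl fun J hJ => ?_
  rw [eval_clearedPoly_insert_left_node_sub hs hp hq (mem_powersetCard.1 hJ).1]
  ring

theorem sum_eval_clearedPoly_node_add (hs : Separated x h) (hq : q ∈ S.erase p) (k : ℕ) :
    ∑ K ∈ S.powersetCard (k + 1), eval (x q + h) (clearedPoly x h S K p) =
      2 * h * (∏ j ∈ (S.erase p).erase q, (x q - x j + 2 * h)) *
        cutSum x h ((S.erase p).erase q) k := by
  have hpq : p ≠ q := (ne_of_mem_erase hq).symm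
  rw [← sum_congr rfl fun K hK => ite_eq_left_iff.2 fun hK' =>
      (eval_clearedPoly_node_add_eq_zero hq (mem_powersetCard.1 hK).1 hK').symm,
    sum_powersetCard_succ_ite (mem_of_mem_erase hq) hpq.symm, erase_right_comm, cutSum, mul_sum]
  refine sum_congr rfl fun J hJ => ?_
  rw [eval_clearedPoly_insert_right_node_add hs hq (mem_powersetCard.1 hJ).1]
  ring

end Nodes

theorem natDegree_linkPoly_le (K : Finset ι) (p j : ι) : (linkPoly x h K p j).natDegree ≤ 3 := by
  unfold linkPoly
  split_ifs
  · exact natDegree_nodeCubic j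
  all_goals exact (natDegree_X_sub_C_le _).trans (by norm_num)

theorem natDegree_linkPoly_lt {K : Finset ι} {p j : ι} (hj : ¬(j ∈ K ↔ p ∈ K)) :
    (linkPoly x h K p j).natDegree < 3 := by
  rw [linkPoly, if_neg hj]
  split_ifs <;> exact (natDegree_X_sub_C_le _).trans_lt (by norm_num)

theorem exists_mem_erase_not_iff {S K : Finset ι} {p : ι} (hp : p ∈ S) (hK : K ⊆ S)
    (h0 : K.Nonempty) (hlt : #K < #S) : ∃ j ∈ S.erase p, ¬(j ∈ K ↔ p ∈ K) := by
  by_cases hpK : p ∈ K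
  · obtain ⟨j, hj⟩ := sdiff_nonempty.2 fun hSK => (card_le_card hSK).not_gt hlt
    obtain ⟨hjS, hjK⟩ := mem_sdiff.1 hj
    exact ⟨j, mem_erase.2 ⟨by rintro rfl; exact hjK hpK, hjS⟩, by tauto⟩
  · obtain ⟨j, hjK⟩ := h0
    exact ⟨j, mem_erase.2 ⟨by rintro rfl; exact hpK hjK, hK hjK⟩, by tauto⟩

theorem natDegree_clearedPoly_lt {S K : Finset ι} {p : ι} (hp : p ∈ S) (hK : K ⊆ S)
    (h0 : K.Nonempty) (hlt : #K < #S) :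
    (clearedPoly x h S K p).natDegree < 3 * #(S.erase p) := by
  obtain ⟨j, hj, hjK⟩ := exists_mem_erase_not_iff hp hK h0 hlt
  calc (clearedPoly x h S K p).natDegree
      ≤ (∏ j ∈ S.erase p, linkPoly x h K p j).natDegree := natDegree_C_mul_le _ _
    _ ≤ ∑ j ∈ S.erase p, (linkPoly x h K p j).natDegree := natDegree_prod_le _ _
    _ < ∑ _j ∈ S.erase p, 3 :=
      sum_lt_sum (fun j _ => natDegree_linkPoly_le K p j) ⟨j, hj, natDegree_linkPoly_lt hjK⟩
    _ = 3 * #(S.erase p) := by rw [sum_const, smul_eq_mul, mul_comm]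

theorem natDegree_sum_clearedPoly_lt {S : Finset ι} {p : ι} (hp : p ∈ S) {k : ℕ}
    (hk : k + 1 < #S) :
    (∑ K ∈ S.powersetCard (k + 1), clearedPoly x h S K p).natDegree < 3 * #(S.erase p) := by
  have hpos : 0 < 3 * #(S.erase p) := by rw [card_erase_of_mem hp]; omega
  refine (natDegree_sum_le_of_forall_le _ _ fun K hK => Nat.le_sub_one_of_lt ?_).trans_lt
    (Nat.sub_one_lt_of_lt hpos)
  obtain ⟨hKS, hKc⟩ := mem_powersetCard.1 hK
  exact natDegree_clearedPoly_lt hp hKS (card_pos.1 (by omega)) (by omega)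

theorem sum_clearedPoly_neg (hs : Separated x h) (hh : h ≠ 0) {S : Finset ι} {p : ι}
    (hp : p ∈ S) {k : ℕ} (hk : k + 1 < #S)
    (ih : ∀ q ∈ S.erase p,
      cutSum x (-h) ((S.erase p).erase q) k = cutSum x h ((S.erase p).erase q) k) :
    ∑ K ∈ S.powersetCard (k + 1), clearedPoly x (-h) S K p =
      ∑ K ∈ S.powersetCard (k + 1), clearedPoly x h S K p := by
  refine eq_of_natDegree_lt_card_of_eval_eq _ _ (hs.injective_node hh (S.erase p)) ?_ ?_
  · rintro ⟨⟨q, hq⟩, t⟩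
    simp only [eval_finsetSum]
    fin_cases t
    · have hprod : ∏ j ∈ (S.erase p).erase q, (x q - x j + 2 * -h) =
          ∏ j ∈ (S.erase p).erase q, (x q - x j - 2 * h) := prod_congr rfl fun _ _ => by ring
      simp only [Nat.cast_zero, zero_sub, neg_one_mul]
      rw [sum_eval_clearedPoly_node_add hs.neg hq, ← sub_eq_add_neg,
        sum_eval_clearedPoly_node_sub hs hp hq, hprod, ih q hq]
      ring
    · simp only [Nat.cast_one, sub_self, zero_mul, add_zero]
      rw [sum_eval_clearedPoly_node hs.neg hp hq, sum_eval_clearedPoly_node hs hp hq]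
    · have hprod : ∏ j ∈ (S.erase p).erase q, (x q - x j - 2 * -h) =
          ∏ j ∈ (S.erase p).erase q, (x q - x j + 2 * h) := prod_congr rfl fun _ _ => by ring
      norm_num
      rw [← sub_neg_eq_add, sum_eval_clearedPoly_node_sub hs.neg hp hq, sub_neg_eq_add,
        sum_eval_clearedPoly_node_add hs hq, hprod, ih q hq]
      ring
  · rw [Fintype.card_prod, Fintype.card_coe, Fintype.card_fin, mul_comm, max_lt_iff]
    exact ⟨natDegree_sum_clearedPoly_lt hp hk, natDegree_sum_clearedPoly_lt hp hk⟩

theorem cutSum_neg (hs : Separated x h) (hh : h ≠ 0) (S : Finset ι) (k : ℕ) :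
    cutSum x (-h) S k = cutSum x h S k := by
  induction S using Finset.strongInduction generalizing k with
  | H S ih =>
  by_cases htriv : k = 0 ∨ #S ≤ k
  · refine sum_congr rfl fun K hK => ?_
    obtain ⟨hKS, hKc⟩ := mem_powersetCard.1 hK
    have hK' : K = ∅ ∨ S ⊆ K := htriv.imp (fun hk => card_eq_zero.1 (hKc.trans hk))
      fun hk => (eq_of_subset_of_card_le hKS (hKc ▸ hk)).ge
    rw [cutProduct_eq_one hK', cutProduct_eq_one hK']
  obtain ⟨k, rfl⟩ : ∃ k', k = k' + 1 := Nat.exists_eq_succ_of_ne_zero (by omega)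
  obtain ⟨p, hp⟩ : S.Nonempty := card_pos.1 (by omega)
  have hD : ∏ j ∈ S.erase p, eval (x p) (nodeCubic x h j) ≠ 0 :=
    prod_ne_zero_iff.2 fun j hj => eval_nodeCubic_ne_zero hs (ne_of_mem_erase hj).symm
  have key := congrArg (eval (x p)) <| sum_clearedPoly_neg hs hh hp (by omega) fun q _ =>
    ih _ ((erase_subset q _).trans_ssubset (erase_ssubset hp)) k
  rw [eval_sum_clearedPoly_self hs.neg hp, eval_sum_clearedPoly_self hs hp] at key
  simp only [nodeCubic_neg] at key
  exact mul_right_cancel₀ hD key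

theorem continuousAt_cutSum {S : Finset ι} (k : ℕ)
    (hw : ∀ i ∈ S, ∀ j ∈ S, i ≠ j → (x i - x j) * (x i - x j + h) ≠ 0) :
    ContinuousAt (fun z => cutSum x z S k) h := by
  refine tendsto_finsetSum _ fun K hK => tendsto_finsetProd _ fun i hi =>
    tendsto_finsetProd _ fun j hj => ?_
  obtain ⟨hKS, -⟩ := mem_powersetCard.1 hK
  obtain ⟨hjS, hjK⟩ := mem_sdiff.1 hj
  exact (continuousAt_const.mul (continuousAt_const.add continuousAt_id)).inv₀
    (hw i (hKS hi) j hjS (by rintro rfl; exact hjK hi))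

end TodaSubsetIdentity

open TodaSubsetIdentity

theorem toda_lemma4_a_zero_general (n k : ℕ) (lam : Fin n → ℂ) (h : ℂ)
    (hdist : ∀ i j : Fin n, i ≠ j → lam i ≠ lam j)
    (hp : ∀ i j : Fin n, i ≠ j → lam i - lam j + h ≠ 0)
    (hm : ∀ i j : Fin n, i ≠ j → lam i - lam j - h ≠ 0) :
    ∑ K ∈ powersetCard k (univ : Finset (Fin n)),
        ∏ i ∈ K, ∏ j ∈ Kᶜ, ((lam i - lam j) * (lam i - lam j + h))⁻¹
      = ∑ K ∈ powersetCard k (univ : Finset (Fin n)),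
          ∏ i ∈ K, ∏ j ∈ Kᶜ, ((lam i - lam j) * (lam i - lam j - h))⁻¹ := by
  have hx : Function.Injective lam := fun i j hij => by_contra fun hne => hdist i j hne hij
  have hplus : ContinuousAt (fun z => cutSum lam z univ k) h :=
    continuousAt_cutSum k fun i _ j _ hij =>
      mul_ne_zero (sub_ne_zero.2 (hdist i j hij)) (hp i j hij)
  have hminus : ContinuousAt (fun z => cutSum lam (-z) univ k) h :=
    (continuousAt_cutSum k fun i _ j _ hij => mul_ne_zero (sub_ne_zero.2 (hdist i j hij))
      (by simpa [← sub_eq_add_neg] using hm i j hij)).comp continuousAt_neg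
  have hgeneric := (eventually_nhdsNE_separated hx h).mono fun z hz =>
    (cutSum_neg hz.2 hz.1 univ k).symm
  have heq := ((hplus.eventuallyEq_nhds_iff_eventuallyEq_nhdsNE hminus).1 hgeneric).eq_of_nhds
  simpa [cutSum, cutProduct, pairWeight, compl_eq_univ_sdiff, sub_eq_add_neg] using heq

/-- The `a = 0` case of the subset identity (Lemma 4): for `1 ≤ k ≤ n-1`,
the sum over k-element subsets with `+h` shifts equals the one with `-h` shifts. -/
theorem toda_lemma4_a_zero (n k : ℕ) (lam : Fin n → ℂ) (h : ℂ) (hh : h ≠ 0)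
    (hdist : ∀ i j : Fin n, i ≠ j → lam i ≠ lam j)
    (hp : ∀ i j : Fin n, i ≠ j → lam i - lam j + h ≠ 0)
    (hm : ∀ i j : Fin n, i ≠ j → lam i - lam j - h ≠ 0)
    (hk1 : 1 ≤ k) (hk2 : k + 1 ≤ n) :
    ∑ K ∈ powersetCard k (univ : Finset (Fin n)),
        ∏ i ∈ K, ∏ j ∈ Kᶜ, ((lam i - lam j) * (lam i - lam j + h))⁻¹
      = ∑ K ∈ powersetCard k (univ : Finset (Fin n)),
          ∏ i ∈ K, ∏ j ∈ Kᶜ, ((lam i - lam j) * (lam i - lam j - h))⁻¹ :=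
  toda_lemma4_a_zero_general n k lam h hdist hp hm
end

section
/- Let A be a commutative Poisson algebra containing invertible elements X^(0),...,X^(n) and elements Y^(0),...,Y^(n) satisfying {X^(k), X^(l)} = 0, {X^(k), Y^(l)} = (k−l) θ(k−l) X^(k) X^(l), {Y^(k), Y^(l)} = (k−l)(θ(k−l) Y^(k) X^(l) + θ(l−k) X^(k) Y^(l)). Define E_i = X^(n−i+1)/X^(n−i) and p_i = Y^(n−i+1)/X^(n−i+1) − Y^(n−i)/X^(n−i) for 1 ≤ i ≤ n. Then {E_i, E_j} = 0, {E_i, p_j} = −δ_{ij} E_i, and {p_i, p_j} = 0. -/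
/-!
Put `q_k = Y^(k)/X^(k)` and `c(k, l) = max(k - l, 0)`. For each `c`, the map `a ↦ {a, c}` is a
derivation, so `{u, c} = -u² {x, c}` whenever `x u = 1`. With this, the relations say that the
`X^(k)` and their inverses commute, that `{X^(k), q_l} = c(k, l) X^(k)`, and that the `q_k` commute.
Hence `{E_i, q_l} = (c(n-i+1, l) - c(n-i, l)) E_i`, and `{E_i, p_j}` is `E_i` times a second
difference of `max(·, 0)`, which is `-δ_{ij}`.
-/

structure IsSkewBiderivation {A : Type*} [CommRing A] (P : A → A → A) : Prop where
  add_left : ∀ a b c : A, P (a + b) c = P a c + P b c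
  skew : ∀ a b : A, P a b = -P b a
  mul_left : ∀ a b c : A, P (a * b) c = a * P b c + b * P a c

namespace IsSkewBiderivation

variable {A : Type*} [CommRing A] {P : A → A → A}

def derivationLeft (hP : IsSkewBiderivation P) (c : A) : Derivation ℤ A A :=
  Derivation.mk' (AddMonoidHom.mk' (P · c) (hP.add_left · · c)).toIntLinearMap
    (hP.mul_left · · c)

theorem derivationLeft_apply (hP : IsSkewBiderivation P) (a c : A) :
    hP.derivationLeft c a = P a c :=
  rfl

theorem sub_left (hP : IsSkewBiderivation P) (a b c : A) : P (a - b) c = P a c - P b c := by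
  simp only [← derivationLeft_apply hP, Derivation.map_sub]

theorem sub_right (hP : IsSkewBiderivation P) (a b c : A) : P a (b - c) = P a b - P a c := by
  rw [hP.skew, hP.sub_left, hP.skew b, hP.skew c]
  ring

theorem mul_right (hP : IsSkewBiderivation P) (a b c : A) :
    P a (b * c) = b * P a c + c * P a b := by
  rw [hP.skew, hP.mul_left, hP.skew c, hP.skew b]
  ring

theorem inv_left (hP : IsSkewBiderivation P) {x u : A} (hxu : x * u = 1) (c : A) :
    P u c = -u ^ 2 * P x c := by
  simpa only [← derivationLeft_apply hP, smul_eq_mul, neg_mul] using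
    (hP.derivationLeft c).leibniz_of_mul_eq_one (mul_comm x u ▸ hxu)

theorem inv_right (hP : IsSkewBiderivation P) {x u : A} (hxu : x * u = 1) (a : A) :
    P a u = -u ^ 2 * P a x := by
  rw [hP.skew, hP.inv_left hxu, hP.skew x]
  ring

theorem mul_left_eq_of_eq_mul (hP : IsSkewBiderivation P) {a b c α β : A}
    (ha : P a c = α * a) (hb : P b c = β * b) : P (a * b) c = (α + β) * (a * b) := by
  rw [hP.mul_left, ha, hb]
  ring

section LogCanonical

variable {x u y x' u' y' α β : A}

theorem inv_inv_eq_zero (hP : IsSkewBiderivation P) (hu : x * u = 1) (hu' : x' * u' = 1)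
    (hxx : P x x' = 0) : P u u' = 0 := by
  rw [hP.inv_left hu, hP.inv_right hu', hxx, mul_zero, mul_zero]

theorem left_inv_eq_zero (hP : IsSkewBiderivation P) (hu' : x' * u' = 1)
    (hxx : P x x' = 0) : P x u' = 0 := by
  rw [hP.inv_right hu', hxx, mul_zero]

theorem inv_left_eq_zero (hP : IsSkewBiderivation P) (hu : x * u = 1)
    (hxx : P x x' = 0) : P u x' = 0 := by
  rw [hP.inv_left hu, hxx, mul_zero]

theorem left_div_eq (hP : IsSkewBiderivation P) (hu' : x' * u' = 1) (hxx : P x x' = 0)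
    (hxy : P x y' = α * (x * x')) : P x (y' * u') = α * x := by
  rw [hP.mul_right, hxy, hP.left_inv_eq_zero hu' hxx]
  linear_combination (α * x) * hu'

theorem inv_div_eq (hP : IsSkewBiderivation P) (hu : x * u = 1) (hu' : x' * u' = 1)
    (hxx : P x x' = 0) (hxy : P x y' = α * (x * x')) : P u (y' * u') = -α * u := by
  rw [hP.inv_left hu, hP.left_div_eq hu' hxx hxy]
  linear_combination (-α * u) * hu

theorem div_div_eq_zero (hP : IsSkewBiderivation P) (hu : x * u = 1) (hu' : x' * u' = 1)
    (hxx : P x x' = 0) (hxy : P x y' = α * (x * x')) (hyx : P x' y = β * (x' * x))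
    (hyy : P y y' = α * (y * x') - β * (x * y')) : P (y * u) (y' * u') = 0 := by
  have hyu' : P y u' = β * x * u' := by
    rw [hP.inv_right hu', hP.skew, hyx]
    linear_combination (β * x * u') * hu'
  rw [hP.mul_left, hP.inv_div_eq hu hu' hxx hxy, hP.mul_right, hyy, hyu']
  linear_combination (α * y * u) * hu'

end LogCanonical

end IsSkewBiderivation

theorem ite_lt_natCast_sub_eq {A : Type*} [CommRing A] (k l : ℕ) :
    (if l < k then (k : A) - l else 0) = ((k - l : ℕ) : A) := by
  split_ifs with h
  · rw [Nat.cast_sub h.le]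
  · rw [Nat.sub_eq_zero_of_le (not_lt.mp h), Nat.cast_zero]

theorem natCast_sub_mul_ite_add_ite {A : Type*} [CommRing A] (k l : ℕ) (a b : A) :
    ((k : A) - l) * ((if l < k then a else 0) + (if k < l then b else 0)) =
      ((k - l : ℕ) : A) * a - ((l - k : ℕ) : A) * b := by
  rcases lt_trichotomy k l with h | rfl | h
  · simp only [h, h.not_gt, if_true, if_false, Nat.sub_eq_zero_of_le h.le, Nat.cast_sub h.le]
    ring
  · simp
  · simp only [h, h.not_gt, if_true, if_false, Nat.sub_eq_zero_of_le h.le, Nat.cast_sub h.le]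
    ring

theorem natCast_sub_second_difference {A : Type*} [CommRing A] (a b : ℕ) :
    ((a + 1 - (b + 1) : ℕ) : A) - (a - (b + 1) : ℕ) - (((a + 1 - b : ℕ) : A) - (a - b : ℕ)) =
      -(if a = b then 1 else 0) := by
  have h : (a + 1 - (b + 1)) + (a - b) + (if a = b then 1 else 0) =
      (a - (b + 1)) + (a + 1 - b) := by
    split_ifs <;> omega
  have hA := congrArg (Nat.cast : ℕ → A) h
  push_cast [apply_ite (Nat.cast : ℕ → A)] at hA ⊢
  linear_combination hA

theorem toda_classical_canonical_general (n : ℕ) (A : Type*) [CommRing A]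
    (P : A → A → A)
    (Padd : ∀ a b c : A, P (a + b) c = P a c + P b c)
    (Pskew : ∀ a b : A, P a b = - P b a)
    (Pleib : ∀ a b c : A, P (a * b) c = a * P b c + b * P a c)
    (X Y Xinv : ℕ → A)
    (hXinv : ∀ k : ℕ, k ≤ n → X k * Xinv k = 1)
    (hXX : ∀ k l : ℕ, k ≤ n → l ≤ n → P (X k) (X l) = 0)
    (hXY : ∀ k l : ℕ, k ≤ n → l ≤ n → P (X k) (Y l) =
      (if l < k then ((k : A) - (l : A)) else 0) * (X k * X l))
    (hYY : ∀ k l : ℕ, k ≤ n → l ≤ n → P (Y k) (Y l) = ((k : A) - (l : A)) *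
      ((if l < k then Y k * X l else 0) + (if k < l then X k * Y l else 0)))
    (E p : ℕ → A)
    (hE : ∀ i : ℕ, 1 ≤ i → i ≤ n → E i = X (n - i + 1) * Xinv (n - i))
    (hp : ∀ i : ℕ, 1 ≤ i → i ≤ n →
      p i = Y (n - i + 1) * Xinv (n - i + 1) - Y (n - i) * Xinv (n - i)) :
    ∀ i j : ℕ, 1 ≤ i → i ≤ n → 1 ≤ j → j ≤ n →
      P (E i) (E j) = 0 ∧
      P (E i) (p j) = -(if i = j then E i else 0) ∧
      P (p i) (p j) = 0 := by
  have hP : IsSkewBiderivation P := ⟨Padd, Pskew, Pleib⟩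
  have hXY' (k l : ℕ) (hk : k ≤ n) (hl : l ≤ n) :
      P (X k) (Y l) = ((k - l : ℕ) : A) * (X k * X l) := by
    rw [hXY k l hk hl, ite_lt_natCast_sub_eq]
  have hXq (k l : ℕ) (hk : k ≤ n) (hl : l ≤ n) :
      P (X k) (Y l * Xinv l) = ((k - l : ℕ) : A) * X k :=
    hP.left_div_eq (hXinv l hl) (hXX k l hk hl) (hXY' k l hk hl)
  have hXinvq (k l : ℕ) (hk : k ≤ n) (hl : l ≤ n) :
      P (Xinv k) (Y l * Xinv l) = -((k - l : ℕ) : A) * Xinv k :=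
    hP.inv_div_eq (hXinv k hk) (hXinv l hl) (hXX k l hk hl) (hXY' k l hk hl)
  have hqq (k l : ℕ) (hk : k ≤ n) (hl : l ≤ n) : P (Y k * Xinv k) (Y l * Xinv l) = 0 :=
    hP.div_div_eq_zero (hXinv k hk) (hXinv l hl) (hXX k l hk hl) (hXY' k l hk hl)
      (hXY' l k hl hk) (by rw [hYY k l hk hl, natCast_sub_mul_ite_add_ite])
  have hEq (a l : ℕ) (ha : a + 1 ≤ n) (hl : l ≤ n) : P (X (a + 1) * Xinv a) (Y l * Xinv l) =
      (((a + 1 - l : ℕ) : A) - (a - l : ℕ)) * (X (a + 1) * Xinv a) := by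
    rw [hP.mul_left_eq_of_eq_mul (hXq _ l ha hl) (hXinvq a l (by omega) hl), ← sub_eq_add_neg]
  intro i j hi hin hj hjn
  rw [hE i hi hin, hE j hj hjn, hp i hi hin, hp j hj hjn]
  refine ⟨?_, ?_, ?_⟩
  · rw [hP.mul_left, hP.mul_right, hP.mul_right, hXX _ _ (by omega) (by omega),
      hP.left_inv_eq_zero (hXinv _ (by omega)) (hXX _ _ (by omega) (by omega)),
      hP.inv_left_eq_zero (hXinv _ (by omega)) (hXX _ _ (by omega) (by omega)),
      hP.inv_inv_eq_zero (hXinv _ (by omega)) (hXinv _ (by omega)) (hXX _ _ (by omega) (by omega))]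
    ring
  · rw [hP.sub_right, hEq _ _ (by omega) (by omega), hEq _ _ (by omega) (by omega), ← sub_mul,
      natCast_sub_second_difference]
    have hij : n - i = n - j ↔ i = j := by omega
    simp only [hij, ite_mul, one_mul, zero_mul, neg_mul]
  · rw [hP.sub_left, hP.sub_right, hP.sub_right, hqq _ _ (by omega) (by omega),
      hqq _ _ (by omega) (by omega), hqq _ _ (by omega) (by omega), hqq _ _ (by omega) (by omega)]
    ring

/-- Canonical Poisson brackets for the reconstructed classical Toda variables
`E_i = X^(n−i+1)/X^(n−i)` and `p_i = Y^(n−i+1)/X^(n−i+1) − Y^(n−i)/X^(n−i)`. -/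
theorem toda_classical_canonical (n : ℕ) (A : Type*) [CommRing A]
    (P : A → A → A)
    (Padd : ∀ a b c : A, P (a + b) c = P a c + P b c)
    (Pskew : ∀ a b : A, P a b = - P b a)
    (Pleib : ∀ a b c : A, P (a * b) c = a * P b c + b * P a c)
    (Pjac : ∀ a b c : A, P (P a b) c + P (P b c) a + P (P c a) b = 0)
    (X Y Xinv : ℕ → A)
    (hXinv : ∀ k : ℕ, k ≤ n → X k * Xinv k = 1)
    (hXX : ∀ k l : ℕ, k ≤ n → l ≤ n → P (X k) (X l) = 0)
    (hXY : ∀ k l : ℕ, k ≤ n → l ≤ n → P (X k) (Y l) =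
      (if l < k then ((k : A) - (l : A)) else 0) * (X k * X l))
    (hYY : ∀ k l : ℕ, k ≤ n → l ≤ n → P (Y k) (Y l) = ((k : A) - (l : A)) *
      ((if l < k then Y k * X l else 0) + (if k < l then X k * Y l else 0)))
    (E p : ℕ → A)
    (hE : ∀ i : ℕ, 1 ≤ i → i ≤ n → E i = X (n - i + 1) * Xinv (n - i))
    (hp : ∀ i : ℕ, 1 ≤ i → i ≤ n →
      p i = Y (n - i + 1) * Xinv (n - i + 1) - Y (n - i) * Xinv (n - i)) :
    ∀ i j : ℕ, 1 ≤ i → i ≤ n → 1 ≤ j → j ≤ n →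
      P (E i) (E j) = 0 ∧
      P (E i) (p j) = -(if i = j then E i else 0) ∧
      P (p i) (p j) = 0 :=
  toda_classical_canonical_general n A P Padd Pskew Pleib X Y Xinv hXinv hXX hXY hYY E p hE hp
end

section
/- Under the same hypotheses ([X^(k), X^(l)] = 0, [X^(k), Y^(l)] = iħ(k−l)θ(k−l) X^(k) X^(l), [Y^(k), Y^(l)] = iħ(k−l)(θ(k−l) Y^(k) X^(l) + θ(l−k) Y^(l) X^(k)), X's invertible), the elements P^(k) = Y^(k) (X^(k))^{-1} pairwise commute: [P^(k), P^(l)] = 0 for all k, l. -/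
/-- The quantities `P^(k) = Y^(k) (X^(k))⁻¹` pairwise commute, in an associative
algebra with the quantum `X`,`Y` commutation relations. -/
theorem toda_P_commute (n : ℕ) (A : Type*) [Ring A] [Algebra ℂ A]
    (hbar : ℂ) (X Y Xinv : ℕ → A)
    (hXinv : ∀ k : ℕ, k ≤ n → X k * Xinv k = 1 ∧ Xinv k * X k = 1)
    (hXX : ∀ k l : ℕ, k ≤ n → l ≤ n → X k * X l = X l * X k)
    (hXY : ∀ k l : ℕ, k ≤ n → l ≤ n → X k * Y l - Y l * X k =
      (Complex.I * hbar * (if l < k then ((k : ℂ) - (l : ℂ)) else 0)) • (X k * X l))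
    (hYY : ∀ k l : ℕ, k ≤ n → l ≤ n → Y k * Y l - Y l * Y k =
      (Complex.I * hbar) •
        ((if l < k then ((k : ℂ) - (l : ℂ)) else 0) • (Y k * X l) +
         (if k < l then ((k : ℂ) - (l : ℂ)) else 0) • (Y l * X k))) :
    ∀ k l : ℕ, k ≤ n → l ≤ n →
      (Y k * Xinv k) * (Y l * Xinv l) = (Y l * Xinv l) * (Y k * Xinv k) := by
  intro k l hk hl
  obtain ⟨hXa, haX⟩ := hXinv k hk
  obtain ⟨hXb, hbX⟩ := hXinv l hl
  set a := Xinv k with ha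
  set b := Xinv l with hb
  set c1 : ℂ := Complex.I * hbar * (if l < k then ((k : ℂ) - (l : ℂ)) else 0) with hc1
  set c2 : ℂ := Complex.I * hbar * (if k < l then ((l : ℂ) - (k : ℂ)) else 0) with hc2
  -- X l commutes with a
  have hla : X l * a = a * X l := by
    calc X l * a = a * X k * X l * a := by rw [haX, one_mul]
      _ = a * (X k * X l) * a := by rw [mul_assoc a]
      _ = a * (X l * X k) * a := by rw [hXX k l hk hl]
      _ = a * X l * (X k * a) := by simp only [mul_assoc]
      _ = a * X l := by rw [hXa, mul_one]
  -- X k commutes with b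
  have hkb : X k * b = b * X k := by
    calc X k * b = b * X l * X k * b := by rw [hbX, one_mul]
      _ = b * (X l * X k) * b := by rw [mul_assoc b]
      _ = b * (X k * X l) * b := by rw [hXX k l hk hl]
      _ = b * X k * (X l * b) := by simp only [mul_assoc]
      _ = b * X k := by rw [hXb, mul_one]
  -- a commutes with b
  have hab : a * b = b * a := by
    calc a * b = b * X l * a * b := by rw [hbX, one_mul]
      _ = b * (X l * a) * b := by rw [mul_assoc b]
      _ = b * (a * X l) * b := by rw [hla]
      _ = b * a * (X l * b) := by simp only [mul_assoc]
      _ = b * a := by rw [hXb, mul_one]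
  -- move a past Y l
  have hYlXk : Y l * X k = X k * Y l - c1 • (X k * X l) := by
    rw [← hXY k l hk hl]; abel
  have h1 : a * Y l = Y l * a - c1 • (X l * a) := by
    calc a * Y l = a * Y l * (X k * a) := by rw [hXa, mul_one]
      _ = a * (Y l * X k) * a := by simp only [mul_assoc]
      _ = a * (X k * Y l - c1 • (X k * X l)) * a := by rw [hYlXk]
      _ = a * (X k * Y l) * a - c1 • (a * (X k * X l) * a) := by
          rw [mul_sub, sub_mul, mul_smul_comm, smul_mul_assoc]
      _ = Y l * a - c1 • (X l * a) := by
          rw [← mul_assoc a (X k), ← mul_assoc a (X k), haX, one_mul, one_mul]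
  -- move b past Y k
  have hYkXl : Y k * X l = X l * Y k - c2 • (X l * X k) := by
    rw [← hXY l k hl hk]; abel
  have h2 : b * Y k = Y k * b - c2 • (X k * b) := by
    calc b * Y k = b * Y k * (X l * b) := by rw [hXb, mul_one]
      _ = b * (Y k * X l) * b := by simp only [mul_assoc]
      _ = b * (X l * Y k - c2 • (X l * X k)) * b := by rw [hYkXl]
      _ = b * (X l * Y k) * b - c2 • (b * (X l * X k) * b) := by
          rw [mul_sub, sub_mul, mul_smul_comm, smul_mul_assoc]
      _ = Y k * b - c2 • (X k * b) := by
          rw [← mul_assoc b (X l), ← mul_assoc b (X l), hbX, one_mul, one_mul]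
  -- rewrite the YY commutation relation
  have hcoef : (if k < l then ((k : ℂ) - (l : ℂ)) else 0)
      = -(if k < l then ((l : ℂ) - (k : ℂ)) else 0) := by split_ifs <;> ring
  have hYY' : Y k * Y l - Y l * Y k = c1 • (Y k * X l) - c2 • (Y l * X k) := by
    rw [hYY k l hk hl, hcoef, neg_smul, smul_add, smul_neg, smul_smul, smul_smul,
      ← sub_eq_add_neg, ← hc1, ← hc2]
  -- the key identity multiplied by a*b on the right
  have key := congrArg (fun z => z * (a * b)) hYY'
  simp only [sub_mul, smul_mul_assoc, mul_assoc] at key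
  calc (Y k * a) * (Y l * b)
      = Y k * (a * Y l) * b := by simp only [mul_assoc]
    _ = Y k * (Y l * a - c1 • (X l * a)) * b := by rw [h1]
    _ = Y k * (Y l * (a * b)) - c1 • (Y k * (X l * (a * b))) := by
        rw [mul_sub, sub_mul, mul_smul_comm, smul_mul_assoc]
        simp only [mul_assoc]
    _ = Y l * (Y k * (a * b)) - c2 • (Y l * (X k * (a * b))) := by
        rw [sub_eq_sub_iff_sub_eq_sub]; exact key
    _ = Y l * (Y k * (b * a)) - c2 • (Y l * (X k * (b * a))) := by rw [hab]
    _ = Y l * (b * Y k) * a := by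
        rw [h2, mul_sub, sub_mul, mul_smul_comm, smul_mul_assoc]
        simp only [mul_assoc]
    _ = (Y l * b) * (Y k * a) := by simp only [mul_assoc]
end

section
/- Canonical quantum commutation relations for reconstructed Toda variables: under the same hypotheses, define E_i = X^(n−i+1) (X^(n−i))^{-1} and p_i = Y^(n−i+1)(X^(n−i+1))^{-1} − Y^(n−i)(X^(n−i))^{-1} for 1 ≤ i ≤ n. Then [E_i, E_j] = 0, [E_i, p_j] = −iħ δ_{ij} E_i, and [p_i, p_j] = 0. -/
section TodaAux
variable {A : Type*} [Ring A]

/-- Conjugation helper: if `x` is invertible with inverse `xi` and `x * u = v * x`,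
then `u * xi = xi * v`. -/
lemma toda_conj {x xi u v : A} (h1 : x * xi = 1) (h2 : xi * x = 1)
    (h : x * u = v * x) : u * xi = xi * v := by
  calc u * xi = xi * x * (u * xi) := by rw [h2, one_mul]
    _ = xi * (x * u) * xi := by noncomm_ring
    _ = xi * (v * x) * xi := by rw [h]
    _ = xi * v * (x * xi) := by noncomm_ring
    _ = xi * v := by rw [h1, mul_one]

end TodaAux

/-- Canonical quantum commutation relations for the reconstructed Toda variables
`E_i = X^(n−i+1)(X^(n−i))⁻¹` and `p_i = Y^(n−i+1)(X^(n−i+1))⁻¹ − Y^(n−i)(X^(n−i))⁻¹`. -/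
theorem toda_quantum_canonical (n : ℕ) (A : Type*) [Ring A] [Algebra ℂ A]
    (hbar : ℂ) (hhbar : hbar ≠ 0) (X Y Xinv : ℕ → A)
    (hXinv : ∀ k : ℕ, k ≤ n → X k * Xinv k = 1 ∧ Xinv k * X k = 1)
    (hXX : ∀ k l : ℕ, k ≤ n → l ≤ n → X k * X l = X l * X k)
    (hXY : ∀ k l : ℕ, k ≤ n → l ≤ n → X k * Y l - Y l * X k =
      (Complex.I * hbar * (if l < k then ((k : ℂ) - (l : ℂ)) else 0)) • (X k * X l))
    (hYY : ∀ k l : ℕ, k ≤ n → l ≤ n → Y k * Y l - Y l * Y k =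
      (Complex.I * hbar) •
        ((if l < k then ((k : ℂ) - (l : ℂ)) else 0) • (Y k * X l) +
         (if k < l then ((k : ℂ) - (l : ℂ)) else 0) • (Y l * X k))) :
    ∀ (E p : ℕ → A),
      (∀ i : ℕ, 1 ≤ i → i ≤ n → E i = X (n - i + 1) * Xinv (n - i)) →
      (∀ i : ℕ, 1 ≤ i → i ≤ n →
        p i = Y (n - i + 1) * Xinv (n - i + 1) - Y (n - i) * Xinv (n - i)) →
      ∀ i j : ℕ, 1 ≤ i → i ≤ n → 1 ≤ j → j ≤ n →
        E i * E j = E j * E i ∧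
        E i * p j - p j * E i = (if i = j then -((Complex.I * hbar) • E i) else 0) ∧
        p i * p j = p j * p i := by
  intro E p hE hp i j hi1 hin hj1 hjn
  set c : ℕ → ℕ → ℂ := fun k l => Complex.I * hbar * (if l < k then ((k : ℂ) - (l : ℂ)) else 0)
    with hc
  -- X k * Y l = Y l * X k + c k l • (X k * X l)
  have hXY' : ∀ k l, k ≤ n → l ≤ n →
      X k * Y l = Y l * X k + c k l • (X k * X l) := by
    intro k l hk hl
    have h := hXY k l hk hl
    rw [sub_eq_iff_eq_add] at h
    rw [h, add_comm]
  -- Xinv commutes with X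
  have hXiX : ∀ k l, k ≤ n → l ≤ n → Xinv k * X l = X l * Xinv k := by
    intro k l hk hl
    exact (toda_conj (hXinv k hk).1 (hXinv k hk).2 (hXX k l hk hl)).symm
  -- Xinv commutes with Xinv
  have hXiXi : ∀ k l, k ≤ n → l ≤ n → Xinv k * Xinv l = Xinv l * Xinv k := by
    intro k l hk hl
    exact toda_conj (hXinv l hl).1 (hXinv l hl).2 (hXiX k l hk hl).symm
  -- Xinv k * Y l
  have hXiY : ∀ k l, k ≤ n → l ≤ n →
      Xinv k * Y l = Y l * Xinv k - c k l • (X l * Xinv k) := by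
    intro k l hk hl
    have h : X k * Y l = (Y l + c k l • X l) * X k := by
      rw [hXY' k l hk hl, hXX k l hk hl, add_mul, smul_mul_assoc]
    have h2 := toda_conj (hXinv k hk).1 (hXinv k hk).2 h
    -- h2 : Y l * Xinv k = Xinv k * (Y l + c k l • X l)
    rw [mul_add, mul_smul_comm, hXiX k l hk hl] at h2
    rw [h2]
    abel
  -- X k commutes with q l := Y l * Xinv l  up to c k l • X k
  have hXq : ∀ k l, k ≤ n → l ≤ n →
      X k * (Y l * Xinv l) = (Y l * Xinv l) * X k + c k l • X k := by
    intro k l hk hl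
    calc X k * (Y l * Xinv l) = (X k * Y l) * Xinv l := by rw [mul_assoc]
      _ = (Y l * X k + c k l • (X k * X l)) * Xinv l := by rw [hXY' k l hk hl]
      _ = Y l * (X k * Xinv l) + c k l • (X k * (X l * Xinv l)) := by
          simp only [add_mul, smul_mul_assoc, mul_assoc]
      _ = (Y l * Xinv l) * X k + c k l • X k := by
          rw [(hXiX l k hl hk).symm, (hXinv l hl).1, mul_one, ← mul_assoc]
  -- Xinv k with q l
  have hXiq : ∀ k l, k ≤ n → l ≤ n →
      Xinv k * (Y l * Xinv l) = (Y l * Xinv l) * Xinv k - c k l • Xinv k := by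
    intro k l hk hl
    have h : X k * (Y l * Xinv l) = (Y l * Xinv l + c k l • (1 : A)) * X k := by
      rw [add_mul, smul_mul_assoc, one_mul]; exact hXq k l hk hl
    have h2 := toda_conj (hXinv k hk).1 (hXinv k hk).2 h
    rw [mul_add, mul_smul_comm, mul_one] at h2
    rw [h2]; abel
  -- expansion of products of q's
  have hexp : ∀ k l, k ≤ n → l ≤ n →
      (Y k * Xinv k) * (Y l * Xinv l) =
        Y k * (Y l * (Xinv k * Xinv l)) - c k l • (Y k * (X l * (Xinv k * Xinv l))) := by
    intro k l hk hl
    calc (Y k * Xinv k) * (Y l * Xinv l)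
        = Y k * ((Xinv k * Y l) * Xinv l) := by
          simp only [mul_assoc]
      _ = Y k * ((Y l * Xinv k - c k l • (X l * Xinv k)) * Xinv l) := by
          rw [hXiY k l hk hl]
      _ = Y k * (Y l * (Xinv k * Xinv l)) - c k l • (Y k * (X l * (Xinv k * Xinv l))) := by
          simp only [sub_mul, smul_mul_assoc, mul_sub, mul_smul_comm, mul_assoc]
  -- q's commute
  have hqq : ∀ k l, k ≤ n → l ≤ n →
      (Y k * Xinv k) * (Y l * Xinv l) = (Y l * Xinv l) * (Y k * Xinv k) := by
    intro k l hk hl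
    have h1 := hexp k l hk hl
    have h2 := hexp l k hl hk
    rw [hXiXi l k hl hk] at h2
    have key : Y k * Y l - Y l * Y k - c k l • (Y k * X l) + c l k • (Y l * X k) = 0 := by
      rw [hYY k l hk hl, smul_add, smul_smul, smul_smul]
      have e2 : Complex.I * hbar * (if k < l then ((k : ℂ) - (l : ℂ)) else 0) = -(c l k) := by
        simp only [hc]
        split_ifs <;> ring
      have e1 : Complex.I * hbar * (if l < k then ((k : ℂ) - (l : ℂ)) else 0) = c k l := by
        simp only [hc]
      rw [e1, e2, neg_smul]
      abel
    have key2 : (Y k * Y l - Y l * Y k - c k l • (Y k * X l) + c l k • (Y l * X k)) *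
        (Xinv k * Xinv l) = 0 := by rw [key, zero_mul]
    simp only [add_mul, sub_mul, smul_mul_assoc, mul_assoc] at key2
    rw [h1, h2]
    refine eq_of_sub_eq_zero ?_
    rw [← key2]; abel
  -- commutator of E-type element with q l
  have hEcomm : ∀ m a l, m ≤ n → a ≤ n → l ≤ n →
      (X m * Xinv a) * (Y l * Xinv l) - (Y l * Xinv l) * (X m * Xinv a) =
        (c m l - c a l) • (X m * Xinv a) := by
    intro m a l hm ha hl
    have h1 : (X m * Xinv a) * (Y l * Xinv l) =
        (Y l * Xinv l) * (X m * Xinv a) + c m l • (X m * Xinv a) - c a l • (X m * Xinv a) := by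
      calc (X m * Xinv a) * (Y l * Xinv l) = X m * (Xinv a * (Y l * Xinv l)) := by
            rw [mul_assoc]
        _ = X m * ((Y l * Xinv l) * Xinv a) - c a l • (X m * Xinv a) := by
            rw [hXiq a l ha hl, mul_sub, mul_smul_comm]
        _ = (X m * (Y l * Xinv l)) * Xinv a - c a l • (X m * Xinv a) := by
            rw [← mul_assoc]
        _ = ((Y l * Xinv l) * X m + c m l • X m) * Xinv a - c a l • (X m * Xinv a) := by
            rw [hXq m l hm hl]
        _ = (Y l * Xinv l) * (X m * Xinv a) + c m l • (X m * Xinv a) -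
              c a l • (X m * Xinv a) := by
            simp only [add_mul, smul_mul_assoc, mul_assoc]
    rw [h1, sub_smul]
    abel
  -- bounds
  have hia : n - i ≤ n := by omega
  have hia1 : n - i + 1 ≤ n := by omega
  have hja : n - j ≤ n := by omega
  have hja1 : n - j + 1 ≤ n := by omega
  refine ⟨?_, ?_, ?_⟩
  · -- E i * E j = E j * E i
    rw [hE i hi1 hin, hE j hj1 hjn]
    have cWY : Commute (X (n - i + 1)) (X (n - j + 1)) := hXX _ _ hia1 hja1
    have cWZ : Commute (X (n - i + 1)) (Xinv (n - j)) := (hXiX _ _ hja hia1).symm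
    have cXY : Commute (Xinv (n - i)) (X (n - j + 1)) := hXiX _ _ hia hja1
    have cXZ : Commute (Xinv (n - i)) (Xinv (n - j)) := hXiXi _ _ hia hja
    exact ((cWY.mul_right cWZ).mul_left (cXY.mul_right cXZ)).eq
  · -- E i * p j - p j * E i
    rw [hE i hi1 hin, hp j hj1 hjn]
    have h1 := hEcomm (n - i + 1) (n - i) (n - j + 1) hia1 hia hja1
    have h2 := hEcomm (n - i + 1) (n - i) (n - j) hia1 hia hja
    have hmain : (X (n - i + 1) * Xinv (n - i)) *
        (Y (n - j + 1) * Xinv (n - j + 1) - Y (n - j) * Xinv (n - j)) -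
        (Y (n - j + 1) * Xinv (n - j + 1) - Y (n - j) * Xinv (n - j)) *
        (X (n - i + 1) * Xinv (n - i)) =
        ((c (n - i + 1) (n - j + 1) - c (n - i) (n - j + 1)) -
          (c (n - i + 1) (n - j) - c (n - i) (n - j))) • (X (n - i + 1) * Xinv (n - i)) := by
      rw [mul_sub, sub_mul, sub_smul, ← h1, ← h2]
      abel
    rw [hmain]
    by_cases hij : i = j
    · subst hij
      rw [if_pos rfl, ← neg_smul]
      congr 1
      simp only [hc]
      rw [if_neg (lt_irrefl _), if_neg (by omega), if_pos (by omega), if_neg (lt_irrefl _)]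
      push_cast
      ring
    · rw [if_neg hij]
      have hab : n - i ≠ n - j := by omega
      rcases lt_or_gt_of_ne hab with hlt | hgt
      · rw [show (c (n - i + 1) (n - j + 1) - c (n - i) (n - j + 1)) -
            (c (n - i + 1) (n - j) - c (n - i) (n - j)) = 0 from ?_, zero_smul]
        simp only [hc]
        rw [if_neg (by omega), if_neg (by omega), if_neg (by omega), if_neg (by omega)]
        ring
      · rcases Nat.lt_or_ge (n - j + 1) (n - i) with h' | h'
        · rw [show (c (n - i + 1) (n - j + 1) - c (n - i) (n - j + 1)) -
              (c (n - i + 1) (n - j) - c (n - i) (n - j)) = 0 from ?_, zero_smul]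
          simp only [hc]
          rw [if_pos (by omega), if_pos (by omega), if_pos (by omega), if_pos (by omega)]
          push_cast
          ring
        · -- n - i = n - j + 1
          have heq : n - i = n - j + 1 := by omega
          rw [show (c (n - i + 1) (n - j + 1) - c (n - i) (n - j + 1)) -
              (c (n - i + 1) (n - j) - c (n - i) (n - j)) = 0 from ?_, zero_smul]
          simp only [hc]
          rw [if_pos (by omega), if_neg (by omega), if_pos (by omega), if_pos (by omega)]
          rw [heq]
          push_cast
          ring
  · -- p i * p j = p j * p i
    rw [hp i hi1 hin, hp j hj1 hjn]
    have c11 : Commute (Y (n - i + 1) * Xinv (n - i + 1)) (Y (n - j + 1) * Xinv (n - j + 1)) :=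
      hqq _ _ hia1 hja1
    have c10 : Commute (Y (n - i + 1) * Xinv (n - i + 1)) (Y (n - j) * Xinv (n - j)) :=
      hqq _ _ hia1 hja
    have c01 : Commute (Y (n - i) * Xinv (n - i)) (Y (n - j + 1) * Xinv (n - j + 1)) :=
      hqq _ _ hia hja1
    have c00 : Commute (Y (n - i) * Xinv (n - i)) (Y (n - j) * Xinv (n - j)) :=
      hqq _ _ hia hja
    exact ((c11.sub_right c10).sub_left (c01.sub_right c00)).eq
end

section
/- Classical involution of interpolated Hamiltonians (rank-1 case of the general result): on ℂ-valued coordinates (λ_1, μ_1, ..., λ_n, μ_n) with Poisson bracket {λ_k, λ_l} = 0, {μ_k, λ_l} = μ_k δ_{kl}, {μ_k, μ_l} = 0, define H_0,...,H_{n−1} as the coefficients (besides the fixed leading part) of t(λ) = (λ + Σ_i λ_i)∏_i (λ − λ_i) + Σ_i ∏_{j≠i} (λ − λ_j)/(λ_i − λ_j) · (μ_i + μ_i^{-1}), i.e., t(λ) = λ^{n+1} + 0·λ^n + Σ_{j=0}^{n−1} H_j λ^j. Then {H_i, H_j} = 0 for all i, j. -/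
open Finset Polynomial

/-!
`T` is `X ^ (n + 1)` plus a polynomial of degree `< n`, and it interpolates `T(λ_k) = c_k` with
`c_k = μ_k + μ_k⁻¹`. For a derivation `D` applied coefficientwise, `D T` has degree `< n` and
`D (T(λ_k)) = (D T)(λ_k) + T'(λ_k) D λ_k`, so Lagrange interpolation at the nodes `λ_k` gives
`D T_a = ∑_k L_k[a] (D c_k - T'(λ_k) D λ_k)`. With `σ_l = μ_l - μ_l⁻¹`, taking `D = {·, λ_l}` and
`D = {·, c_l}` yields `{T_a, λ_l} = L_l[a] σ_l` and `{T_a, c_l} = L_l[a] T'(λ_l) σ_l`;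
substituted into `D = {·, T_b}`, every summand cancels.
-/

theorem PolynomialModule.eval_equivPolynomialSelf {A : Type*} [CommRing A] (x : A)
    (q : PolynomialModule A A) : (equivPolynomialSelf q).eval x = eval x q := by
  induction q using induction_linear with
  | zero => simp
  | add p q hp hq => rw [map_add, eval_add, hp, hq, map_add]
  | single n a => simp [mul_comm]

namespace Derivation

variable {R A : Type*} [CommRing R] [CommRing A] [Algebra R A] (d : Derivation R A A)

noncomputable def mapCoeffsSelf (p : A[X]) : A[X] :=
  PolynomialModule.equivPolynomialSelf (d.mapCoeffs p)

@[simp]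
theorem coeff_mapCoeffsSelf (p : A[X]) (i : ℕ) :
    (d.mapCoeffsSelf p).coeff i = d (p.coeff i) :=
  rfl

theorem apply_eval_eq_mapCoeffsSelf (x : A) (p : A[X]) :
    d (p.eval x) = (d.mapCoeffsSelf p).eval x + (derivative p).eval x * d x := by
  rw [d.apply_eval_eq, mapCoeffsSelf, PolynomialModule.eval_equivPolynomialSelf, smul_eq_mul]

end Derivation

theorem Polynomial.eq_zero_of_degree_lt_of_eval_eq_zero {A ι : Type*} [CommRing A] [Fintype ι]
    {v : ι → A} (hv : Pairwise fun i j => IsUnit (v i - v j)) {p : A[X]}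
    (hdeg : p.degree < Fintype.card ι) (heval : ∀ i, p.eval (v i) = 0) : p = 0 := by
  nontriviality A
  have hmonic : (∏ i, (X - C (v i))).Monic := monic_prod_X_sub_C v univ
  have hdvd : ∏ i, (X - C (v i)) ∣ p :=
    Fintype.prod_dvd_of_coprime (fun i j hij => isCoprime_X_sub_C_of_isUnit_sub (hv hij))
      fun i => dvd_iff_isRoot.mpr (heval i)
  rw [← (modByMonic_eq_zero_iff_dvd hmonic).mpr hdvd, (modByMonic_eq_self_iff hmonic).mpr]
  rwa [degree_eq_natDegree hmonic.ne_zero, natDegree_finsetProd_X_sub_C_eq_card, card_univ]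

section Interpolation

variable {A : Type*} [CommRing A] {n : ℕ} (lam : Fin n → A) (u : Fin n → Fin n → A)

/-- `u i j` stands for `(lam i - lam j)⁻¹`. -/
noncomputable def lagrangeBasis (i : Fin n) : A[X] :=
  ∏ j ∈ univ.erase i, ((X - C (lam j)) * C (u i j))

variable {lam u}

theorem eval_lagrangeBasis (hu : ∀ i j, i ≠ j → (lam i - lam j) * u i j = 1) (i k : Fin n) :
    (lagrangeBasis lam u i).eval (lam k) = if i = k then 1 else 0 := by
  rw [lagrangeBasis, eval_prod]
  split_ifs with hik
  · subst hik
    exact prod_eq_one fun j hj => by simpa using hu i j (ne_of_mem_erase hj).symm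
  · exact prod_eq_zero (mem_erase.mpr ⟨Ne.symm hik, mem_univ k⟩) (by simp)

theorem natDegree_lagrangeBasis_le (i : Fin n) : (lagrangeBasis lam u i).natDegree ≤ n - 1 := by
  refine (natDegree_prod_le _ _).trans ?_
  refine (sum_le_sum fun j _ => (natDegree_mul_C_le _ _).trans (natDegree_X_sub_C_le _)).trans ?_
  simp

theorem degree_lagrangeBasis_lt (i : Fin n) : (lagrangeBasis lam u i).degree < n :=
  degree_le_natDegree.trans_lt <| by
    exact_mod_cast (natDegree_lagrangeBasis_le i).trans_lt (Nat.sub_lt i.pos one_pos)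

theorem degree_sum_lagrangeBasis_mul_C_lt (w : Fin n → A) :
    (∑ i, lagrangeBasis lam u i * C (w i)).degree < n := by
  refine (degree_lt_iff_coeff_zero _ _).mpr fun m hm => ?_
  simp [finsetSum_coeff, coeff_mul_C,
    (degree_lt_iff_coeff_zero _ _).mp (degree_lagrangeBasis_lt _) m hm]

theorem eval_sum_lagrangeBasis_mul_C (hu : ∀ i j, i ≠ j → (lam i - lam j) * u i j = 1)
    (w : Fin n → A) (k : Fin n) :
    (∑ i, lagrangeBasis lam u i * C (w i)).eval (lam k) = w k := by
  simp [eval_finsetSum, eval_lagrangeBasis hu]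

theorem eq_sum_lagrangeBasis_mul_C (hu : ∀ i j, i ≠ j → (lam i - lam j) * u i j = 1)
    {p : A[X]} (hp : p.degree < n) :
    p = ∑ i, lagrangeBasis lam u i * C (p.eval (lam i)) := by
  have hunit : Pairwise fun i j => IsUnit (lam i - lam j) :=
    fun i j hij => IsUnit.of_mul_eq_one _ (hu i j hij)
  refine sub_eq_zero.mp (eq_zero_of_degree_lt_of_eval_eq_zero hunit ?_ fun k => ?_)
  · rw [Fintype.card_fin]
    exact (degree_sub_le _ _).trans_lt (max_lt hp (degree_sum_lagrangeBasis_mul_C_lt _))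
  · rw [eval_sub, eval_sum_lagrangeBasis_mul_C hu, sub_self]

theorem Derivation.apply_coeff_eq_sum_lagrangeBasis {R : Type*} [CommRing R] [Algebra R A]
    (hu : ∀ i j, i ≠ j → (lam i - lam j) * u i j = 1) (d : Derivation R A A)
    {p : A[X]} {m : ℕ} (hp : (p - X ^ m).degree < (n : WithBot ℕ)) (a : ℕ) :
    d (p.coeff a) = ∑ k, (lagrangeBasis lam u k).coeff a *
      (d (p.eval (lam k)) - (derivative p).eval (lam k) * d (lam k)) := by
  have hdeg : (d.mapCoeffsSelf p).degree < n := by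
    refine (degree_lt_iff_coeff_zero _ _).mpr fun b hb => ?_
    have hcoeff : p.coeff b = (X ^ m : A[X]).coeff b := by
      simpa [sub_eq_zero] using (degree_lt_iff_coeff_zero _ _).mp hp b hb
    rw [coeff_mapCoeffsSelf, hcoeff, coeff_X_pow]
    split_ifs <;> simp
  have heval : ∀ k, (d.mapCoeffsSelf p).eval (lam k) =
      d (p.eval (lam k)) - (derivative p).eval (lam k) * d (lam k) :=
    fun k => eq_sub_of_add_eq (d.apply_eval_eq_mapCoeffsSelf _ _).symm
  rw [← d.coeff_mapCoeffsSelf, eq_sum_lagrangeBasis_mul_C hu hdeg, finsetSum_coeff]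
  simp only [coeff_mul_C, heval, mul_comm]

end Interpolation

theorem degree_X_add_C_sum_mul_prod_X_sub_C_sub_X_pow_lt {A ι : Type*} [CommRing A]
    (s : Finset ι) (v : ι → A) :
    ((X + C (∑ i ∈ s, v i)) * ∏ i ∈ s, (X - C (v i)) - X ^ (#s + 1)).degree <
      (#s : WithBot ℕ) := by
  nontriviality A
  set M := (X + C (∑ i ∈ s, v i)) * ∏ i ∈ s, (X - C (v i))
  have hmonic : M.Monic := (monic_X_add_C _).mul (monic_prod_X_sub_C v s)
  have hdeg : M.natDegree = #s + 1 := by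
    rw [(monic_X_add_C _).natDegree_mul (monic_prod_X_sub_C v s), natDegree_X_add_C,
      natDegree_finsetProd_X_sub_C_eq_card, add_comm]
  have hnext : M.coeff #s = 0 := by
    have := (monic_X_add_C (∑ i ∈ s, v i)).nextCoeff_mul (monic_prod_X_sub_C v s)
    rwa [nextCoeff_X_add_C, prod_X_sub_C_nextCoeff, add_neg_cancel,
      nextCoeff_of_natDegree_pos (by rw [hdeg]; omega), hdeg, Nat.add_sub_cancel] at this
  refine (degree_lt_iff_coeff_zero _ _).mpr fun m hm => ?_
  rw [coeff_sub, coeff_X_pow]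
  rcases hm.eq_or_lt with rfl | hm
  · simp [hnext]
  rcases (Nat.succ_le_of_lt hm).eq_or_lt with rfl | hm
  · simp [← hdeg, hmonic.coeff_natDegree]
  · simp [coeff_eq_zero_of_natDegree_lt (hdeg.trans_lt hm), hm.ne']

section Bracket

variable {A : Type*} [CommRing A] (P : A → A → A)

noncomputable def bracketDerivation (Padd : ∀ a b c : A, P (a + b) c = P a c + P b c)
    (Pleib : ∀ a b c : A, P (a * b) c = a * P b c + b * P a c) (b : A) : Derivation ℤ A A :=
  Derivation.mk' (AddMonoidHom.mk' (P · b) fun x y => Padd x y b).toIntLinearMap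
    fun x y => Pleib x y b

@[simp]
theorem bracketDerivation_apply (Padd : ∀ a b c : A, P (a + b) c = P a c + P b c)
    (Pleib : ∀ a b c : A, P (a * b) c = a * P b c + b * P a c) (a b : A) :
    bracketDerivation P Padd Pleib b a = P a b := rfl

theorem bracket_eq_neg_sq_mul_of_mul_eq_one (Padd : ∀ a b c : A, P (a + b) c = P a c + P b c)
    (Pleib : ∀ a b c : A, P (a * b) c = a * P b c + b * P a c) {x y : A} (h : x * y = 1) (z : A) :
    P y z = -y ^ 2 * P x z := by
  simpa using (bracketDerivation P Padd Pleib z).leibniz_of_mul_eq_one (mul_comm x y ▸ h)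

theorem bracket_coeff_eq_zero_of_eval_eq {n : ℕ}
    (Padd : ∀ a b c : A, P (a + b) c = P a c + P b c)
    (Pskew : ∀ a b : A, P a b = - P b a)
    (Pleib : ∀ a b c : A, P (a * b) c = a * P b c + b * P a c)
    {lam c σ : Fin n → A} {u : Fin n → Fin n → A}
    (hu : ∀ i j, i ≠ j → (lam i - lam j) * u i j = 1)
    (hll : ∀ k l, P (lam k) (lam l) = 0)
    (hcl : ∀ k l, P (c k) (lam l) = if k = l then σ k else 0)
    (hcc : ∀ k l, P (c k) (c l) = 0)
    {T : A[X]} {m : ℕ} (hTdeg : (T - X ^ m).degree < (n : WithBot ℕ))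
    (hTeval : ∀ k, T.eval (lam k) = c k) (i j : ℕ) : P (T.coeff i) (T.coeff j) = 0 := by
  set L := lagrangeBasis lam u
  set T' := derivative T
  have expand : ∀ z a, P (T.coeff a) z =
      ∑ k, (L k).coeff a * (P (c k) z - T'.eval (lam k) * P (lam k) z) := fun z a => by
    simpa [hTeval] using
      (bracketDerivation P Padd Pleib z).apply_coeff_eq_sum_lagrangeBasis hu hTdeg a
  have hTlam : ∀ a l, P (T.coeff a) (lam l) = (L l).coeff a * σ l := fun a l => by
    simp [expand, hll, hcl]
  have hTc : ∀ a l, P (T.coeff a) (c l) = (L l).coeff a * (T'.eval (lam l) * σ l) := by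
    intro a l
    simp [expand, hcc, Pskew (lam _) (c l), hcl]
  rw [expand]
  refine sum_eq_zero fun k _ => ?_
  rw [Pskew (c k), Pskew (lam k), hTlam, hTc]
  ring

end Bracket

/-- Classical involution of the interpolated Toda Hamiltonians: the coefficients
`H_j` (for `j < n`) of
`t(λ) = (λ + Σ λ_i) ∏ (λ − λ_i) + Σ_i ∏_{j≠i} (λ − λ_j)/(λ_i − λ_j) (μ_i + μ_i⁻¹)`
Poisson-commute, for the bracket `{λ_k,λ_l}=0`, `{μ_k,λ_l}=μ_k δ_{kl}`,
`{μ_k,μ_l}=0`. -/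
theorem toda_classical_hamiltonians_involution (n : ℕ) (A : Type*) [CommRing A]
    (P : A → A → A)
    (Padd : ∀ a b c : A, P (a + b) c = P a c + P b c)
    (Pskew : ∀ a b : A, P a b = - P b a)
    (Pleib : ∀ a b c : A, P (a * b) c = a * P b c + b * P a c)
    (lam mu muinv : Fin n → A) (u : Fin n → Fin n → A)
    (hu : ∀ i j : Fin n, i ≠ j → (lam i - lam j) * u i j = 1)
    (hmuinv : ∀ i : Fin n, mu i * muinv i = 1)
    (hll : ∀ k l : Fin n, P (lam k) (lam l) = 0)
    (hml : ∀ k l : Fin n, P (mu k) (lam l) = if k = l then mu k else 0)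
    (hmm : ∀ k l : Fin n, P (mu k) (mu l) = 0)
    (T : Polynomial A)
    (hT : T = (X + C (∑ i, lam i)) * ∏ i, (X - C (lam i)) +
        ∑ i, (∏ j ∈ univ.erase i, ((X - C (lam j)) * C (u i j))) * C (mu i + muinv i)) :
    ∀ i j : ℕ, i < n → j < n → P (T.coeff i) (T.coeff j) = 0 := by
  intro i j _ _
  have hinv : ∀ k z, P (muinv k) z = -muinv k ^ 2 * P (mu k) z := fun k =>
    bracket_eq_neg_sq_mul_of_mul_eq_one P Padd Pleib (hmuinv k)
  have hmc : ∀ k l, P (mu k) (mu l + muinv l) = 0 := fun k l => by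
    rw [Pskew, Padd, hinv, hmm]; ring
  have hcl : ∀ k l, P (mu k + muinv k) (lam l) = if k = l then mu k - muinv k else 0 :=
    fun k l => by
      rw [Padd, hinv, hml]
      split_ifs
      · linear_combination (-muinv k) * hmuinv k
      · ring
  have hTdeg : (T - X ^ (n + 1)).degree < (n : WithBot ℕ) := by
    have hQ := degree_X_add_C_sum_mul_prod_X_sub_C_sub_X_pow_lt univ lam
    rw [card_univ, Fintype.card_fin] at hQ
    rw [hT, add_sub_right_comm]
    exact (degree_add_le _ _).trans_lt (max_lt hQ (degree_sum_lagrangeBasis_mul_C_lt _))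
  have hTeval : ∀ k, T.eval (lam k) = mu k + muinv k := fun k => by
    rw [hT, eval_add, eval_mul, eval_prod, prod_eq_zero (mem_univ k) (by simp), mul_zero,
      zero_add]
    exact eval_sum_lagrangeBasis_mul_C hu _ k
  exact bracket_coeff_eq_zero_of_eval_eq P Padd Pskew Pleib hu hll hcl
    (fun k l => by rw [Padd, hinv, hmc]; ring) hTdeg hTeval i j
end

section
/- Quantum commuting Hamiltonians: with operators satisfying μ_k λ_l = (λ_l + iħ δ_{kl}) μ_k, [λ_k, λ_l] = [μ_k, μ_l] = 0, define for each λ in the center t(λ) = (λ + Σ_i λ_i)∏_i (λ − λ_i) + Σ_i ∏_{j≠i} (λ − λ_j)(λ_i − λ_j)^{-1} (μ_i + μ_i^{-1}), with all μ-factors written to the right. Then the operator coefficients H_j of λ^j in t(λ) pairwise commute: [H_i, H_j] = 0. -/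
open Finset Polynomial

/-!
Write `t(λ) = Σ_k c_k(λ) w_k`, where `k` runs over a shift-free index (`c = a`, `w = 1`) and the
pairs `(i, ±)` (`c = c_i`, `w = μ_i^{±1}`). The `w_k` commute with each other and
`w_k r = s_k(r) w_k`, where `s_k` (`id`, `σ_i` or `σ_i⁻¹`) moves at most the single node `λ_i`, by
`±iħ`. Hence `t(x) t(y) = Σ_{k,l} c_k(x) (s_k c_l)(y) w_k w_l`, and since the `(k, l)` and `(l, k)`
terms carry the same `w_k w_l`, `[t(x), t(y)]` vanishes as soon as `c_k(x) (s_k c_k)(y)` and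
`c_k(x) (s_k c_l)(y) + c_l(x) (s_l c_k)(y)` are symmetric in `x` and `y`. For the Lagrange-type
polynomials `c_i` these are explicit identities: if `s_k` shifts `λ_i` by `d` and `s_l` shifts
`λ_j ≠ λ_i` by `e`, the antisymmetric part is a multiple of
`(λ_i - λ_j + d) / (λ_j - λ_i - d) + (λ_i - λ_j - e) / (λ_i - λ_j - e) = -1 + 1`, which is where the
invertibility of `λ_i - λ_j ± iħ` enters.
-/

theorem Fintype.sum_sum_eq_zero_of_antisymm {ι M : Type*} [Fintype ι] [AddCommMonoid M]
    (f : ι → ι → M) (hf : ∀ k l, k ≠ l → f k l + f l k = 0) (hdiag : ∀ k, f k k = 0) :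
    ∑ k, ∑ l, f k l = 0 := by
  rw [← Finset.sum_product']
  refine Finset.sum_ninvolution Prod.swap (fun ⟨k, l⟩ => ?_) (fun ⟨k, l⟩ hkl => ?_)
    (fun _ => mem_univ _) Prod.swap_swap
  · by_cases h : k = l
    · subst h
      simp [hdiag]
    · exact hf k l h
  · rintro h
    obtain rfl : k = l := congrArg Prod.fst h.symm
    exact hkl (hdiag k)

theorem Ring.inverse_neg {M : Type*} [Ring M] (x : M) : Ring.inverse (-x) = -Ring.inverse x := by
  by_cases h : IsUnit x
  · obtain ⟨u, rfl⟩ := h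
    rw [← Units.val_neg, Ring.inverse_unit, Ring.inverse_unit, inv_neg, Units.val_neg]
  · rw [Ring.inverse_non_unit _ h, Ring.inverse_non_unit _ (by rwa [IsUnit.neg_iff]), neg_zero]

theorem IsUnit.map_ringInverse {M N F : Type*} [MonoidWithZero M] [MonoidWithZero N]
    [FunLike F M N] [MonoidHomClass F M N] (f : F) {x : M} (hx : IsUnit x) :
    f (Ring.inverse x) = Ring.inverse (f x) := by
  obtain ⟨u, rfl⟩ := hx
  rw [Ring.inverse_unit, show f u = (Units.map (f : M →* N) u : N) from rfl, Ring.inverse_unit]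
  rfl

theorem RingEquiv.symm_comp_eq_update {R ι : Type*} [Ring R] [DecidableEq ι] {lam : ι → R}
    {σ : R ≃+* R} {i : ι} {h : R} (hσ : ⇑σ ∘ lam = Function.update lam i (lam i + h))
    (hσh : σ h = h) : ⇑σ.symm ∘ lam = Function.update lam i (lam i + -h) := by
  funext l
  refine σ.injective ?_
  rw [Function.comp_apply, RingEquiv.apply_symm_apply]
  by_cases hl : l = i
  · subst hl
    rw [Function.update_self, map_add, map_neg, hσh, ← Function.comp_apply (f := σ), hσ,
      Function.update_self, add_neg_cancel_right]
  · rw [Function.update_of_ne hl, ← Function.comp_apply (f := σ), hσ, Function.update_of_ne hl]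

namespace Polynomial.Bivariate

variable {R : Type*} [CommRing R]

/-- `extMul p q` is `p(x) q(y)`, with `x` the inner and `y` the outer variable. -/
noncomputable def extMul (p q : R[X]) : R[X][Y] := C p * q.map C

theorem coeff_coeff_extMul (p q : R[X]) (a b : ℕ) :
    ((extMul p q).coeff b).coeff a = p.coeff a * q.coeff b := by
  rw [extMul, coeff_C_mul, coeff_map, coeff_mul_C]

theorem swap_extMul (p q : R[X]) : swap (extMul p q) = extMul q p := by
  rw [extMul, extMul, map_mul, swap_C, swap_map_C, mul_comm]

theorem coeff_coeff_swap (F : R[X][Y]) (a b : ℕ) :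
    ((swap F).coeff b).coeff a = (F.coeff a).coeff b := by
  induction F using Polynomial.induction_on' with
  | add p q hp hq => simp only [map_add, coeff_add, hp, hq]
  | monomial n f =>
    induction f using Polynomial.induction_on' with
    | add p q hp hq => simp only [map_add, coeff_add, hp, hq]
    | monomial m r =>
      rw [swap_monomial_monomial]
      simp only [coeff_monomial]
      split_ifs <;> simp_all [coeff_monomial]

end Polynomial.Bivariate

open Polynomial.Bivariate

theorem Polynomial.commute_coeff_sum_map_mul_C {R A ι : Type*} [CommRing R] [Ring A] [Fintype ι]
    (φ : R →+* A) (s : ι → R →+* R) (w : ι → A) (p : ι → R[X])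
    (hshift : ∀ k r, SemiconjBy (w k) (φ r) (φ (s k r))) (hw : ∀ k l, Commute (w k) (w l))
    (hdiag : ∀ k, swap (extMul (p k) ((p k).map (s k))) = extMul (p k) ((p k).map (s k)))
    (hpair : ∀ k l, k ≠ l →
      swap (extMul (p k) ((p l).map (s k)) + extMul (p l) ((p k).map (s l))) =
        extMul (p k) ((p l).map (s k)) + extMul (p l) ((p k).map (s l)))
    (a b : ℕ) :
    Commute ((∑ k, (p k).map φ * C (w k)).coeff a) ((∑ k, (p k).map φ * C (w k)).coeff b) := by
  set P : ι → ι → R[X][Y] := fun k l => extMul (p k) ((p l).map (s k)) with hP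
  have coeff_mul_coeff : ∀ a b, (∑ k, (p k).map φ * C (w k)).coeff a *
      (∑ k, (p k).map φ * C (w k)).coeff b =
        ∑ k, ∑ l, φ (((P k l).coeff b).coeff a) * (w k * w l) := by
    intro a b
    simp only [finsetSum_coeff, coeff_mul_C, coeff_map, Finset.sum_mul_sum, hP,
      coeff_coeff_extMul, map_mul]
    refine Finset.sum_congr rfl fun k _ => Finset.sum_congr rfl fun l _ => ?_
    rw [mul_assoc, ← mul_assoc (w k), hshift k, mul_assoc, mul_assoc]
  have sub_eq_zero_of_swap : ∀ F : R[X][Y], swap F = F →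
      φ ((F.coeff b).coeff a) - φ ((F.coeff a).coeff b) = 0 := by
    intro F hF
    rw [← coeff_coeff_swap, hF, sub_self]
  rw [Commute, SemiconjBy, coeff_mul_coeff, coeff_mul_coeff, ← sub_eq_zero,
    ← Finset.sum_sub_distrib]
  simp_rw [← Finset.sum_sub_distrib, ← sub_mul]
  refine Fintype.sum_sum_eq_zero_of_antisymm _ (fun k l hkl => ?_) (fun k => ?_)
  · rw [(hw l k).eq, ← add_mul, sub_add_sub_comm, ← map_add, ← map_add, ← coeff_add, ← coeff_add,
      ← coeff_add, ← coeff_add, sub_eq_zero_of_swap _ (hpair k l hkl), zero_mul]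
  · rw [sub_eq_zero_of_swap _ (hdiag k), zero_mul]

namespace Lagrange

variable {R ι : Type*} [CommRing R]

theorem prod_X_sub_C_mul_C (s : Finset ι) (u v : ι → R) :
    ∏ j ∈ s, ((X - C (u j)) * C (v j)) = nodal s u * C (∏ j ∈ s, v j) := by
  rw [prod_mul_distrib, map_prod, nodal]

theorem nodal_erase_update [DecidableEq ι] (s : Finset ι) (lam : ι → R) (i : ι) (x : R) :
    nodal (s.erase i) (Function.update lam i x) = nodal (s.erase i) lam :=
  prod_congr rfl fun j hj => by rw [Function.update_of_ne (mem_erase.mp hj).1]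

end Lagrange

open Lagrange

namespace Toda

variable {R ι : Type*} [CommRing R] [Fintype ι]

/-- `nodalTerm lam` and `basis lam i` are the `μ`-free part of `t(λ)` and the coefficient of
`μ_i + μ_i⁻¹`; `Ring.inverse` is `0` off the units. -/
noncomputable def nodalTerm (lam : ι → R) : R[X] := (X + C (∑ i, lam i)) * nodal univ lam

theorem map_nodalTerm (lam : ι → R) (f : R →+* R) :
    (nodalTerm lam).map f = nodalTerm (f ∘ lam) := by
  rw [nodalTerm, nodalTerm, Polynomial.map_mul, Polynomial.map_add, map_X, map_C, map_sum, nodal,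
    nodal, Polynomial.map_prod]
  simp only [Polynomial.map_sub, map_X, map_C, Function.comp_apply]

variable [DecidableEq ι]

noncomputable def basis (lam : ι → R) (i : ι) : R[X] :=
  ∏ j ∈ univ.erase i, ((X - C (lam j)) * C (Ring.inverse (lam i - lam j)))

theorem map_basis (lam : ι → R) (f : R →+* R) (hunit : ∀ i j, i ≠ j → IsUnit (lam i - lam j))
    (i : ι) : (basis lam i).map f = basis (f ∘ lam) i := by
  simp only [basis, Polynomial.map_prod, Polynomial.map_mul, Polynomial.map_sub, map_X, map_C]
  refine prod_congr rfl fun j hj => ?_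
  rw [(hunit i j (mem_erase.mp hj).1.symm).map_ringInverse f, map_sub]
  rfl

variable {lam : ι → R}

theorem basis_eq_nodal_mul_C (i : ι) :
    basis lam i = nodal (univ.erase i) lam * C (∏ j ∈ univ.erase i, Ring.inverse (lam i - lam j)) :=
  prod_X_sub_C_mul_C _ _ _

theorem basis_eq_of_ne {i j : ι} (hij : i ≠ j) :
    basis lam i = (X - C (lam j)) * C (Ring.inverse (lam i - lam j)) *
      (nodal ((univ.erase i).erase j) lam *
        C (∏ k ∈ (univ.erase i).erase j, Ring.inverse (lam i - lam k))) := by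
  rw [basis, ← mul_prod_erase _ _ (mem_erase.mpr ⟨hij.symm, mem_univ j⟩), prod_X_sub_C_mul_C]

theorem nodalTerm_update_add (i : ι) (d : R) :
    nodalTerm (Function.update lam i (lam i + d)) =
      (X + C (∑ j, lam j) + C d) * ((X - C (lam i) - C d) * nodal (univ.erase i) lam) := by
  rw [nodalTerm, nodal_eq_mul_nodal_erase (mem_univ i), nodal_erase_update, Function.update_self,
    sum_update_of_mem (mem_univ i), ← add_sum_erase _ _ (mem_univ i), sdiff_singleton_eq_erase,
    map_add, map_add, map_add]
  ring

theorem basis_update_self (i : ι) (x : R) :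
    basis (Function.update lam i x) i =
      nodal (univ.erase i) lam * C (∏ j ∈ univ.erase i, Ring.inverse (x - lam j)) := by
  rw [basis_eq_nodal_mul_C, nodal_erase_update, Function.update_self]
  congr 2
  exact prod_congr rfl fun j hj => by rw [Function.update_of_ne (mem_erase.mp hj).1]

theorem basis_update_of_ne {i j : ι} (hij : i ≠ j) (x : R) :
    basis (Function.update lam i x) j = (X - C x) * C (Ring.inverse (lam j - x)) *
      (nodal ((univ.erase i).erase j) lam *
        C (∏ k ∈ (univ.erase i).erase j, Ring.inverse (lam j - lam k))) := by
  rw [basis_eq_of_ne hij.symm, Function.update_self, Function.update_of_ne hij.symm,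
    erase_right_comm]
  have hS : ∀ k ∈ (univ.erase i).erase j, Function.update lam i x k = lam k :=
    fun k hk => Function.update_of_ne (mem_erase.mp (mem_of_mem_erase hk)).1 _ _
  rw [nodal, nodal, prod_congr rfl (g := fun k => X - C (lam k)) fun k hk => by rw [hS k hk],
    prod_congr rfl (g := fun k => Ring.inverse (lam j - lam k)) fun k hk => by rw [hS k hk]]

theorem swap_extMul_basis_basis_update_self (i : ι) (x : R) :
    swap (extMul (basis lam i) (basis (Function.update lam i x) i)) =
      extMul (basis lam i) (basis (Function.update lam i x) i) := by
  rw [basis_update_self, basis_eq_nodal_mul_C]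
  simp only [extMul, map_mul, swap_C, swap_map_C, Polynomial.map_mul, map_C]
  ring

theorem swap_pair_nodalTerm_basis (i : ι) (d : R) :
    swap (extMul (nodalTerm lam) (basis lam i) +
        extMul (basis lam i) (nodalTerm (Function.update lam i (lam i + d)))) =
      extMul (nodalTerm lam) (basis lam i) +
        extMul (basis lam i) (nodalTerm (Function.update lam i (lam i + d))) := by
  rw [nodalTerm_update_add, nodalTerm, nodal_eq_mul_nodal_erase (mem_univ i), basis_eq_nodal_mul_C]
  simp only [extMul, map_add, map_sub, map_mul, swap_C, swap_map_C, swap_Y, Polynomial.map_mul,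
    Polynomial.map_add, Polynomial.map_sub, map_X, map_C]
  ring

theorem swap_pair_basis_basis {i j : ι} (hij : i ≠ j) {d e : R}
    (hd : IsUnit (lam j - (lam i + d))) (he : IsUnit (lam i - (lam j + e))) :
    swap (extMul (basis lam i) (basis (Function.update lam i (lam i + d)) j) +
        extMul (basis lam j) (basis (Function.update lam j (lam j + e)) i)) =
      extMul (basis lam i) (basis (Function.update lam i (lam i + d)) j) +
        extMul (basis lam j) (basis (Function.update lam j (lam j + e)) i) := by
  have C_C_mul_inverse : ∀ {r : R}, IsUnit r → (C (C r) : R[X][Y]) * C (C (Ring.inverse r)) = 1 :=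
    fun {r} hr => by rw [← map_mul, ← map_mul, Ring.mul_inverse_cancel r hr, map_one, map_one]
  have hd' := C_C_mul_inverse hd
  have he' := C_C_mul_inverse he
  rw [basis_update_of_ne hij, basis_update_of_ne hij.symm, basis_eq_of_ne hij,
    basis_eq_of_ne hij.symm, erase_right_comm (s := univ) (a := j), ← neg_sub (lam i) (lam j),
    Ring.inverse_neg]
  set S := (univ.erase i).erase j
  simp only [extMul, map_add, map_sub, map_neg, map_mul, swap_C, swap_map_C, swap_Y,
    Polynomial.map_mul, Polynomial.map_add, Polynomial.map_sub, map_X, map_C] at hd' he' ⊢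
  linear_combination (C X - X) * C (C (Ring.inverse (lam i - lam j))) * (nodal S lam).map C *
    C (nodal S lam) * C (C (∏ k ∈ S, Ring.inverse (lam i - lam k))) *
    C (C (∏ k ∈ S, Ring.inverse (lam j - lam k))) * (he' - hd')

variable {A κ : Type*} [Ring A] [Fintype κ]

theorem commute_coeff_of_single_node_shifts (φ : R →+* A) (lam : ι → R) (ν : κ → ι) (δ : κ → R)
    (s : κ → R →+* R) (w : κ → A)
    (hs : ∀ k, ⇑(s k) ∘ lam = Function.update lam (ν k) (lam (ν k) + δ k))
    (hshift : ∀ k r, SemiconjBy (w k) (φ r) (φ (s k r))) (hw : ∀ k l, Commute (w k) (w l))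
    (hunit : ∀ i j, i ≠ j → IsUnit (lam i - lam j))
    (hunit_shift : ∀ k j, j ≠ ν k → IsUnit (lam j - (lam (ν k) + δ k))) (a b : ℕ) :
    Commute ((map φ (nodalTerm lam) + ∑ k, map φ (basis lam (ν k)) * C (w k)).coeff a)
      ((map φ (nodalTerm lam) + ∑ k, map φ (basis lam (ν k)) * C (w k)).coeff b) := by
  -- the `μ`-free term becomes the index `none`, with shift `id` and weight `1`
  obtain ⟨p, hp_none, hp_some⟩ : ∃ p : Option κ → R[X],
      p none = nodalTerm lam ∧ ∀ k, p (some k) = basis lam (ν k) :=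
    ⟨fun o => o.elim (nodalTerm lam) fun k => basis lam (ν k), rfl, fun _ => rfl⟩
  obtain ⟨s', hs_none, hs_some⟩ : ∃ s' : Option κ → R →+* R,
      s' none = RingHom.id R ∧ ∀ k, s' (some k) = s k :=
    ⟨fun o => o.elim (RingHom.id R) s, rfl, fun _ => rfl⟩
  obtain ⟨w', hw_none, hw_some⟩ : ∃ w' : Option κ → A, w' none = 1 ∧ ∀ k, w' (some k) = w k :=
    ⟨fun o => o.elim 1 w, rfl, fun _ => rfl⟩
  have hT : map φ (nodalTerm lam) + ∑ k, map φ (basis lam (ν k)) * C (w k) =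
      ∑ o, (p o).map φ * C (w' o) := by
    simp [Fintype.sum_option, hp_none, hp_some, hw_none, hw_some]
  rw [hT]
  refine commute_coeff_sum_map_mul_C φ s' w' p ?_ ?_ ?_ ?_ a b
  · rintro (_ | k) r
    · simp [hs_none, hw_none, SemiconjBy]
    · rw [hs_some, hw_some]
      exact hshift k r
  · rintro (_ | k) (_ | l) <;> simp only [hw_none, hw_some, Commute.one_left, Commute.one_right]
    exact hw k l
  · rintro (_ | k)
    · simp [hs_none, hp_none, swap_extMul]
    · rw [hs_some, hp_some, map_basis _ _ hunit, hs]
      exact swap_extMul_basis_basis_update_self _ _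
  · rintro (_ | k) (_ | l) hkl
    · exact absurd rfl hkl
    · rw [hs_none, hs_some, hp_none, hp_some, map_id, map_nodalTerm, hs]
      exact swap_pair_nodalTerm_basis _ _
    · rw [hs_none, hs_some, hp_none, hp_some, map_id, map_nodalTerm, hs, add_comm]
      exact swap_pair_nodalTerm_basis _ _
    · rw [hs_some, hs_some, hp_some, hp_some, map_basis _ _ hunit, map_basis _ _ hunit, hs, hs]
      by_cases h : ν k = ν l
      · rw [map_add, h, swap_extMul_basis_basis_update_self, swap_extMul_basis_basis_update_self]
      · exact swap_pair_basis_basis h (hunit_shift k _ (Ne.symm h)) (hunit_shift l _ h)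

theorem commute_coeff_of_units (φ : R →+* A) (lam : ι → R) (h : R) (σ : ι → R ≃+* R)
    (μ : ι → Aˣ) (hσ : ∀ k, ⇑(σ k) ∘ lam = Function.update lam k (lam k + h))
    (hσh : ∀ k, σ k h = h) (hshift : ∀ k r, SemiconjBy (μ k : A) (φ r) (φ (σ k r)))
    (hμ : ∀ k l, Commute (μ k) (μ l))
    (hunit : ∀ i j, i ≠ j → ∀ m : ℤ, m.natAbs ≤ 1 → IsUnit (lam i - lam j + m • h)) (a b : ℕ) :
    Commute ((map φ (nodalTerm lam) + ∑ i, map φ (basis lam i) * C ((μ i : A) + ↑(μ i)⁻¹)).coeff a)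
      ((map φ (nodalTerm lam) + ∑ i, map φ (basis lam i) * C ((μ i : A) + ↑(μ i)⁻¹)).coeff b) := by
  have hT : ∑ i, map φ (basis lam i) * C ((μ i : A) + ↑(μ i)⁻¹) =
      ∑ k : ι × Bool, map φ (basis lam k.1) * C ((cond k.2 (μ k.1) (μ k.1)⁻¹ : Aˣ) : A) := by
    simp [Fintype.sum_prod_type, mul_add]
  rw [hT]
  refine commute_coeff_of_single_node_shifts φ lam Prod.fst (fun k => cond k.2 h (-h))
    (fun k => cond k.2 (σ k.1 : R →+* R) ((σ k.1).symm : R →+* R)) _ ?_ ?_ ?_ ?_ ?_ a b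
  · rintro ⟨k, _ | _⟩
    · exact RingEquiv.symm_comp_eq_update (hσ k) (hσh k)
    · exact hσ k
  · rintro ⟨k, _ | _⟩ r
    · refine SemiconjBy.units_inv_symm_left ?_
      simpa using hshift k ((σ k).symm r)
    · exact hshift k r
  · rintro ⟨k, _ | _⟩ ⟨l, _ | _⟩ <;> simp only [cond_false, cond_true]
    · exact (hμ k l).inv_left.inv_right.units_val
    · exact (hμ k l).inv_left.units_val
    · exact (hμ k l).inv_right.units_val
    · exact (hμ k l).units_val
  · intro i j hij
    simpa using hunit i j hij 0 zero_le_one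
  · rintro ⟨i, _ | _⟩ j hj
    · simpa [sub_add_eq_sub_sub] using hunit j i hj 1 le_rfl
    · simpa [sub_add_eq_sub_sub, ← sub_eq_add_neg] using hunit j i hj (-1) le_rfl

end Toda

theorem toda_quantum_hamiltonians_commute_general (n : ℕ) (R A : Type*) [CommRing R]
    [Algebra ℂ R] [Ring A] [Algebra ℂ A]
    (φ : R →ₐ[ℂ] A) (hbar : ℂ)
    (lam : Fin n → R) (mu muinv : Fin n → A) (σ : Fin n → (R ≃ₐ[ℂ] R))
    (hσ : ∀ k l : Fin n, σ k (lam l) =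
      lam l + if k = l then algebraMap ℂ R (Complex.I * hbar) else 0)
    (hshift : ∀ (k : Fin n) (r : R), mu k * φ r = φ (σ k r) * mu k)
    (hmu : ∀ k l : Fin n, mu k * mu l = mu l * mu k)
    (hmuinv : ∀ k : Fin n, mu k * muinv k = 1 ∧ muinv k * mu k = 1)
    (hinv : ∀ i j : Fin n, i ≠ j → ∀ m : ℤ, m.natAbs ≤ 1 →
      IsUnit (lam i - lam j + m • algebraMap ℂ R (Complex.I * hbar)))
    (T : Polynomial A)
    (hT : T = Polynomial.map (φ : R →+* A)
        ((X + C (∑ i, lam i)) * ∏ i, (X - C (lam i))) +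
      ∑ i, Polynomial.map (φ : R →+* A)
          (∏ j ∈ univ.erase i, ((X - C (lam j)) * C (Ring.inverse (lam i - lam j)))) *
        C (mu i + muinv i)) :
    ∀ i j : ℕ, i < n → j < n → T.coeff i * T.coeff j = T.coeff j * T.coeff i := by
  intro i j _ _
  let μ : Fin n → Aˣ := fun k => ⟨mu k, muinv k, (hmuinv k).1, (hmuinv k).2⟩
  have hσ_update : ∀ k, ⇑(σ k) ∘ lam =
      Function.update lam k (lam k + algebraMap ℂ R (Complex.I * hbar)) := fun k => funext fun l => by
    by_cases hkl : k = l
    · subst hkl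
      simp [hσ]
    · simp [hσ, hkl, Function.update_of_ne (Ne.symm hkl)]
  rw [hT]
  exact (Toda.commute_coeff_of_units (φ : R →+* A) lam _ (fun k => (σ k).toRingEquiv) μ hσ_update
    (fun k => (σ k).commutes _) hshift (fun k l => Units.ext (hmu k l)) hinv i j).eq

/-- Quantum commuting Hamiltonians: the operator coefficients `H_j` (`0 ≤ j ≤ n−1`)
of `t(λ) = (λ + Σ λ_i) ∏ (λ − λ_i) + Σ_i ∏_{j≠i} (λ − λ_j)(λ_i − λ_j)⁻¹ (μ_i + μ_i⁻¹)`
(with all μ-factors on the right and λ a formal central variable) pairwise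
commute, for operators satisfying `μ_k λ_l = (λ_l + iħ δ_{kl}) μ_k`,
`[λ_k,λ_l] = [μ_k,μ_l] = 0`, the λ's generating a commutative subalgebra `R`
in which all `λ_i − λ_j + m iħ` (`i ≠ j`, `|m| ≤ 1`) are invertible. -/
theorem toda_quantum_hamiltonians_commute (n : ℕ) (R A : Type*) [CommRing R]
    [Algebra ℂ R] [Ring A] [Algebra ℂ A]
    (φ : R →ₐ[ℂ] A) (hbar : ℂ) (hhbar : hbar ≠ 0)
    (lam : Fin n → R) (mu muinv : Fin n → A) (σ : Fin n → (R ≃ₐ[ℂ] R))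
    (hσ : ∀ k l : Fin n, σ k (lam l) =
      lam l + if k = l then algebraMap ℂ R (Complex.I * hbar) else 0)
    (hshift : ∀ (k : Fin n) (r : R), mu k * φ r = φ (σ k r) * mu k)
    (hmu : ∀ k l : Fin n, mu k * mu l = mu l * mu k)
    (hmuinv : ∀ k : Fin n, mu k * muinv k = 1 ∧ muinv k * mu k = 1)
    (hinv : ∀ i j : Fin n, i ≠ j → ∀ m : ℤ, m.natAbs ≤ 1 →
      IsUnit (lam i - lam j + m • algebraMap ℂ R (Complex.I * hbar)))
    (T : Polynomial A)
    (hT : T = Polynomial.map (φ : R →+* A)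
        ((X + C (∑ i, lam i)) * ∏ i, (X - C (lam i))) +
      ∑ i, Polynomial.map (φ : R →+* A)
          (∏ j ∈ univ.erase i, ((X - C (lam j)) * C (Ring.inverse (lam i - lam j)))) *
        C (mu i + muinv i)) :
    ∀ i j : ℕ, i < n → j < n → T.coeff i * T.coeff j = T.coeff j * T.coeff i :=
  toda_quantum_hamiltonians_commute_general n R A φ hbar lam mu muinv σ hσ hshift hmu hmuinv hinv T
    hT
end
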